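/- arXiv:1801.01873 — 11 statements merged into one kernel-verified Lean document; each statement's English description precedes it below -/
import Mathlib

section
/- Let X be the set of ordinals {α : α ≤ ω} with the subspace topology inherited from the order topology on the ordinals. Then the Cartesian product X × X with the product topology is homeomorphic to X × X equipped with the lexicographic order and the order topology induced by that lexicographic order. -/
/-- The order topology induced by the lexicographic order on `A ×ₗ B`. -/
noncomputable def lexTop (A B : Type*) [LinearOrder A] [LinearOrder B] :
    TopologicalSpace (A ×ₗ B) := Preorder.topology (A ×ₗ B)

/-!
Identify `{α // α ≤ ω}` with `ℕ∞`. Both squares are compact Hausdorff, so a continuous bijection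
`ℕ∞ × ℕ∞ → ℕ∞ ×ₗ ℕ∞` is a homeomorphism. In the lexicographic square every column `{k} × ℕ∞`
with `k` finite is a clopen copy of `ω + 1`, the point `(⊤, 0)` is the limit of these columns
as `k → ∞`, and `{(⊤, j) | j ≥ 1} ∪ {(⊤, ⊤)}` is one more clopen copy of `ω + 1`. In the product
square, the column `x = 0` is a clopen copy of `ω + 1` and is sent onto that last copy; every
other point except `(⊤, ⊤)` lies on exactly one of the clopen half-lines `{(m, y) | y ≥ m}`
(`m ≥ 1`) and `{(x, m) | x > m}` (`m ≥ 0`), which are sent onto the columns `2m - 1` and `2m`;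
finally `(⊤, ⊤) ↦ (⊤, 0)`, which is continuous because the half-lines shrink towards `(⊤, ⊤)`
just as the columns accumulate at `(⊤, 0)`.
-/

open Filter Topology

namespace Prod.Lex

variable {α β : Type*} [LinearOrder α] [LinearOrder β] [TopologicalSpace (α ×ₗ β)]
  [OrderTopology (α ×ₗ β)]

theorem continuous_toLex_mk [TopologicalSpace β] [OrderTopology β] (a : α) :
    Continuous fun b : β ↦ toLex (a, b) := by
  refine OrderTopology.continuous_iff.2 fun c ↦ ⟨?_, ?_⟩ <;>
  · obtain ⟨⟨c₁, c₂⟩, rfl⟩ := toLex.surjective c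
    rcases lt_trichotomy c₁ a with h | rfl | h
    · simp [Set.preimage, Prod.Lex.toLex_lt_toLex, h, h.not_gt, h.ne']
    · simp [Set.preimage, Prod.Lex.toLex_lt_toLex, isOpen_lt', isOpen_gt']
    · simp [Set.preimage, Prod.Lex.toLex_lt_toLex, h, h.not_gt, h.ne, h.ne']

theorem tendsto_nhds_toLex_bot [OrderBot β] [TopologicalSpace α] [OrderTopology α]
    {ι : Type*} {l : Filter ι} {f : ι → α ×ₗ β} {a : α}
    (h_fst : Tendsto (fun i ↦ (ofLex (f i)).1) l (𝓝 a)) (h_le : ∀ᶠ i in l, f i ≤ toLex (a, ⊥)) :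
    Tendsto f l (𝓝 (toLex (a, ⊥))) := by
  refine tendsto_order.2 ⟨fun c hc ↦ ?_, fun c hc ↦ h_le.mono fun i hi ↦ hi.trans_lt hc⟩
  have hc₁ : (ofLex c).1 < a := by
    simpa [Prod.Lex.lt_iff] using hc
  filter_upwards [h_fst.eventually (lt_mem_nhds hc₁)] with i hi
  exact Prod.Lex.lt_iff.2 (Or.inl hi)

end Prod.Lex

namespace ENat

-- At `(⊤, ⊤)` the middle branch gives `(2 * ⊤ - 1, ⊤ - ⊤) = (⊤, 0)`.
def prodToLex (p : ℕ∞ × ℕ∞) : ℕ∞ ×ₗ ℕ∞ :=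
  if p.1 = 0 then toLex (⊤, p.2 + 1)
  else if p.1 ≤ p.2 then toLex (2 * p.1 - 1, p.2 - p.1)
  else toLex (2 * p.2, p.1 - p.2 - 1)

def lexToProd (x : ℕ∞ ×ₗ ℕ∞) : ℕ∞ × ℕ∞ :=
  match ofLex x with
  | (⊤, j) => if j = 0 then (⊤, ⊤) else (0, j - 1)
  | ((k : ℕ), j) =>
    if Even k then (((k / 2 : ℕ) : ℕ∞) + j + 1, ((k / 2 : ℕ) : ℕ∞))
    else (((k / 2 + 1 : ℕ) : ℕ∞), ((k / 2 + 1 : ℕ) : ℕ∞) + j)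

theorem lexToProd_top (j : ℕ∞) :
    lexToProd (toLex (⊤, j)) = if j = 0 then (⊤, ⊤) else (0, j - 1) := rfl

theorem lexToProd_natCast (k : ℕ) (j : ℕ∞) :
    lexToProd (toLex (k, j)) = if Even k then (((k / 2 : ℕ) : ℕ∞) + j + 1, ((k / 2 : ℕ) : ℕ∞))
      else (((k / 2 + 1 : ℕ) : ℕ∞), ((k / 2 + 1 : ℕ) : ℕ∞) + j) := rfl

theorem lexToProd_two_mul (m : ℕ) (j : ℕ∞) :
    lexToProd (toLex (2 * m, j)) = ((m : ℕ∞) + j + 1, (m : ℕ∞)) := by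
  simpa using lexToProd_natCast (2 * m) j

theorem lexToProd_two_mul_add_one (m : ℕ) (j : ℕ∞) :
    lexToProd (toLex (2 * m + 1, j)) = ((m : ℕ∞) + 1, (m : ℕ∞) + 1 + j) := by
  simpa [Nat.even_add_one, Nat.add_div] using lexToProd_natCast (2 * m + 1) j

theorem leftInverse_lexToProd_prodToLex : Function.LeftInverse lexToProd prodToLex := by
  rintro ⟨x, y⟩
  by_cases hx : x = 0
  · subst hx
    simp [prodToLex, lexToProd_top,
      (addLECancellable_of_ne_top one_ne_top).add_tsub_cancel_right]
  by_cases hxy : x ≤ y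
  · induction x using ENat.recTopCoe with
    | top =>
      obtain rfl := top_le_iff.1 hxy
      simp [prodToLex, lexToProd_top]
    | coe n =>
      obtain ⟨n, rfl⟩ := Nat.exists_eq_add_one_of_ne_zero (by exact_mod_cast hx)
      have h_fst : 2 * ((n + 1 : ℕ) : ℕ∞) - 1 = 2 * n + 1 := by norm_cast
      simp only [prodToLex, hx, hxy, if_false, if_true, h_fst, lexToProd_two_mul_add_one]
      rw [← Nat.cast_add_one, add_tsub_cancel_of_le hxy]
  · obtain ⟨m, rfl⟩ := ne_top_iff_exists.1 (lt_of_not_ge hxy).ne_top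
    have h_lt : (m : ℕ∞) < x := lt_of_not_ge hxy
    simp only [prodToLex, hx, hxy, if_false, lexToProd_two_mul]
    rw [add_right_comm, tsub_tsub, add_tsub_cancel_of_le (natCast_add_one_le_iff.mpr h_lt)]

theorem rightInverse_lexToProd_prodToLex : Function.RightInverse lexToProd prodToLex := by
  intro z
  obtain ⟨⟨k, j⟩, rfl⟩ := toLex.surjective z
  induction k using ENat.recTopCoe with
  | top =>
    by_cases hj : j = 0
    · simp [hj, prodToLex, lexToProd_top]
    · simp [hj, prodToLex, lexToProd_top, tsub_add_cancel_of_le (Order.one_le_iff_ne_zero.2 hj)]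
  | coe k =>
    obtain ⟨m, rfl | rfl⟩ := Nat.even_or_odd' k <;> push_cast
    · have h_lt : (m : ℕ∞) < m + j + 1 :=
        natCast_add_one_le_iff.mp (by rw [add_right_comm]; exact le_self_add)
      simp only [lexToProd_two_mul, prodToLex]
      rw [if_neg (zero_le.trans_lt h_lt).ne', if_neg h_lt.not_ge, add_assoc,
        (addLECancellable_natCast m).add_tsub_cancel_left,
        (addLECancellable_of_ne_top one_ne_top).add_tsub_cancel_right]
    · have h_fst : 2 * ((m : ℕ∞) + 1) - 1 = 2 * m + 1 := by norm_cast
      simp only [lexToProd_two_mul_add_one, prodToLex]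
      rw [if_neg (by simp), if_pos le_self_add, h_fst, ← Nat.cast_add_one,
        (addLECancellable_natCast (m + 1)).add_tsub_cancel_left]

theorem natCast_lt_fst_prodToLex {n : ℕ} {x y : ℕ∞} (hx : (n : ℕ∞) < x) (hy : (n : ℕ∞) < y) :
    (n : ℕ∞) < (ofLex (prodToLex (x, y))).1 := by
  simp only [prodToLex]
  split_ifs with h_zero h_le
  · exact natCast_lt_top n
  · refine hx.trans_le (ENat.le_sub_of_add_le_right one_ne_top ?_)
    rw [two_mul]
    exact add_le_add le_rfl (Order.one_le_iff_ne_zero.2 h_zero)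
  · exact hy.trans_le (le_mul_of_one_le_left' one_le_two)

theorem prodToLex_le_toLex_top_zero {x y : ℕ∞} (hx : x ≠ 0) : prodToLex (x, y) ≤ toLex (⊤, 0) := by
  simp only [prodToLex, if_neg hx]
  split_ifs with h_le
  · rcases eq_or_ne x ⊤ with rfl | hx_top
    · simp [top_le_iff.1 h_le]
    · exact (Prod.Lex.toLex_lt_toLex.2 (.inl (tsub_le_self.trans_lt
        (WithTop.mul_lt_top (natCast_lt_top 2) hx_top.lt_top)))).le
  · exact (Prod.Lex.toLex_lt_toLex.2 (.inl
      (WithTop.mul_lt_top (natCast_lt_top 2) (lt_of_not_ge h_le).lt_top))).le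

section Continuity

variable [TopologicalSpace (ℕ∞ ×ₗ ℕ∞)] [OrderTopology (ℕ∞ ×ₗ ℕ∞)]

theorem continuousAt_prodToLex_natCast_top (n : ℕ) : ContinuousAt prodToLex (n, ⊤) := by
  rw [ContinuousAt, nhds_prod_eq, nhds_natCast, pure_prod, tendsto_map'_iff]
  rcases eq_or_ne n 0 with rfl | hn
  · have h : Continuous fun y : ℕ∞ ↦ toLex (⊤, y + 1) :=
      (Prod.Lex.continuous_toLex_mk (⊤ : ℕ∞)).comp (continuous_add_const 1)
    simpa [Function.comp_def, prodToLex] using h.tendsto ⊤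
  · have h_eq :
        (fun y : ℕ∞ ↦ toLex (2 * (n : ℕ∞) - 1, y - n)) =ᶠ[𝓝 ⊤] prodToLex ∘ Prod.mk ↑n := by
      filter_upwards [le_mem_nhds (natCast_lt_top n)] with y hy
      simp [prodToLex, hn, hy]
    refine Tendsto.congr' h_eq ?_
    simpa [prodToLex, hn, Function.comp_def] using
      ((Prod.Lex.continuous_toLex_mk _).tendsto ⊤).comp
        (tendsto_id.enatSub tendsto_const_nhds (.inr (natCast_ne_top n)))

theorem continuousAt_prodToLex_top_natCast (m : ℕ) : ContinuousAt prodToLex (⊤, m) := by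
  rw [ContinuousAt, nhds_prod_eq, nhds_natCast, prod_pure, tendsto_map'_iff]
  have h_eq : (fun x : ℕ∞ ↦ toLex (2 * (m : ℕ∞), x - m - 1)) =ᶠ[𝓝 ⊤]
      prodToLex ∘ fun x ↦ (x, ↑m) := by
    filter_upwards [lt_mem_nhds (natCast_lt_top m)] with x hx
    simp [prodToLex, hx.not_ge, (zero_le.trans_lt hx).ne']
  refine Tendsto.congr' h_eq ?_
  simpa [prodToLex, Function.comp_def] using ((Prod.Lex.continuous_toLex_mk _).tendsto ⊤).comp
    ((tendsto_id.enatSub tendsto_const_nhds (.inr (natCast_ne_top m))).enatSub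
      tendsto_const_nhds (.inr one_ne_top))

theorem continuousAt_prodToLex_top_top : ContinuousAt prodToLex (⊤, ⊤) := by
  have h_top : prodToLex (⊤, ⊤) = toLex (⊤, ⊥) := by simp [prodToLex]
  rw [ContinuousAt, h_top]
  refine Prod.Lex.tendsto_nhds_toLex_bot (tendsto_nhds_top_iff_natCast_lt.2 fun n ↦ ?_) ?_
  · filter_upwards [prod_mem_nhds (lt_mem_nhds (natCast_lt_top n))
      (lt_mem_nhds (natCast_lt_top n))] with ⟨x, y⟩ ⟨hx, hy⟩
    exact natCast_lt_fst_prodToLex hx hy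
  · filter_upwards [prod_mem_nhds (lt_mem_nhds top_pos) univ_mem] with ⟨x, y⟩ ⟨hx, _⟩
    exact prodToLex_le_toLex_top_zero hx.ne'

theorem continuous_prodToLex : Continuous prodToLex :=
  continuous_iff_continuousAt.2 fun
    | (⊤, ⊤) => continuousAt_prodToLex_top_top
    | (⊤, (m : ℕ)) => continuousAt_prodToLex_top_natCast m
    | ((n : ℕ), ⊤) => continuousAt_prodToLex_natCast_top n
    | ((n : ℕ), (m : ℕ)) => by simp [ContinuousAt, nhds_prod_eq, tendsto_pure_nhds]

noncomputable def prodHomeomorphLex : ℕ∞ × ℕ∞ ≃ₜ ℕ∞ ×ₗ ℕ∞ :=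
  continuous_prodToLex.homeoOfEquivCompactToT2
    (f := ⟨prodToLex, lexToProd, leftInverse_lexToProd_prodToLex,
      rightInverse_lexToProd_prodToLex⟩)

end Continuity

end ENat

instance Subtype.orderTopology_le {α : Type*} [TopologicalSpace α] [LinearOrder α]
    [OrderTopology α] (a : α) : OrderTopology {x : α // x ≤ a} :=
  inferInstanceAs (OrderTopology (Set.Iic a))

open Cardinal in
noncomputable def Ordinal.enatOrderIsoLeOmega0 : ℕ∞ ≃o {α : Ordinal // α ≤ Ordinal.omega0} :=
  StrictMono.orderIsoOfSurjective
    (fun n ↦ ⟨(n : Cardinal).ord, ord_aleph0 ▸ ord_le_ord.2 (ofENat_le_aleph0 n)⟩)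
    (fun _ _ h ↦ ord_strictMono (ofENat_strictMono h))
    (by
      rintro ⟨α, hα⟩
      rcases hα.lt_or_eq with hα | rfl
      · obtain ⟨n, rfl⟩ := Ordinal.lt_omega0.1 hα
        exact ⟨n, by simp⟩
      · exact ⟨⊤, by simp⟩)

/-- `X = {α : α ≤ ω}` with the subspace topology from the ordinals: `X × X` with the
product topology is homeomorphic to `X ×ₗ X` with the order topology of the
lexicographic order. -/
theorem stmt_0 :
    letI : TopologicalSpace
        ({α : Ordinal // α ≤ Ordinal.omega0} ×ₗ {α : Ordinal // α ≤ Ordinal.omega0}) :=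
      lexTop _ _
    Nonempty (({α : Ordinal // α ≤ Ordinal.omega0} × {α : Ordinal // α ≤ Ordinal.omega0}) ≃ₜ
      ({α : Ordinal // α ≤ Ordinal.omega0} ×ₗ {α : Ordinal // α ≤ Ordinal.omega0})) := by
  let : TopologicalSpace ({α : Ordinal // α ≤ Ordinal.omega0} ×ₗ
    {α : Ordinal // α ≤ Ordinal.omega0}) := lexTop _ _
  have : OrderTopology ({α : Ordinal // α ≤ Ordinal.omega0} ×ₗ
    {α : Ordinal // α ≤ Ordinal.omega0}) := ⟨rfl⟩
  let : TopologicalSpace (ℕ∞ ×ₗ ℕ∞) := lexTop _ _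
  have : OrderTopology (ℕ∞ ×ₗ ℕ∞) := ⟨rfl⟩
  exact ⟨(Ordinal.enatOrderIsoLeOmega0.toHomeomorph.prodCongr
    Ordinal.enatOrderIsoLeOmega0.toHomeomorph).symm.trans <| ENat.prodHomeomorphLex.trans
      (Prod.Lex.prodLexCongr Ordinal.enatOrderIsoLeOmega0
        Ordinal.enatOrderIsoLeOmega0).toHomeomorph⟩
end

section
/- The space ℚ × ℚ with the product topology (ℚ carrying its standard topology, which is the order topology of its usual order) is homeomorphic to ℚ × ℚ equipped with the lexicographic order (from the usual order on each factor) and the order topology induced by that lexicographic order. -/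
open Finsupp Filter Set Topology PiNat

theorem PiNat.hasBasis_nhds_cylinder {E : ℕ → Type*} [∀ n, TopologicalSpace (E n)]
    [∀ n, DiscreteTopology (E n)] (x : ∀ n, E n) :
    (𝓝 x).HasBasis (fun _ => True) (cylinder x) := by
  refine ⟨fun s => ⟨fun hs => ?_, fun ⟨n, _, hn⟩ =>
    mem_of_superset ((isOpen_cylinder E x n).mem_nhds (self_mem_cylinder x n)) hn⟩⟩
  obtain ⟨_, ⟨y, n, rfl⟩, hx, hs⟩ := (isTopologicalBasis_cylinders E).mem_nhds_iff.1 hs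
  exact ⟨n, trivial, mem_cylinder_iff_eq.1 hx ▸ hs⟩

namespace Finsupp.Lex

variable {N : Type*} [Zero N]

abbrev toPi (f : Lex (ℕ →₀ N)) : ℕ → N := ⇑(ofLex f)

theorem toPi_injective : Function.Injective (toPi (N := N)) :=
  DFunLike.coe_injective.comp ofLex.injective

noncomputable def interleave : Lex (ℕ →₀ N) × Lex (ℕ →₀ N) ≃ Lex (ℕ →₀ N) :=
  (ofLex.prodCongr ofLex).trans <| sumFinsuppEquivProdFinsupp.symm.trans <|
    (equivCongrLeft Equiv.natSumNatEquivNat).trans toLex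

theorem toPi_interleave (p : Lex (ℕ →₀ N) × Lex (ℕ →₀ N)) (s : ℕ ⊕ ℕ) :
    toPi (interleave p) (Equiv.natSumNatEquivNat s) = Sum.elim (toPi p.1) (toPi p.2) s := by
  simp [toPi, interleave, equivCongrLeft_apply, equivMapDomain_apply,
    -Equiv.natSumNatEquivNat_apply]

section LinearOrder

variable [LinearOrder N]

theorem ordConnected_preimage_cylinder (x : ℕ → N) (n : ℕ) :
    OrdConnected (toPi ⁻¹' cylinder x n) := by
  refine ⟨fun a ha b hb g ⟨hag, hgb⟩ i => ?_⟩
  induction i using Nat.strong_induction_on with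
  | _ i ih =>
    intro hi
    have hlt : ∀ j < i, toPi g j = x j := fun j hj => ih j hj (hj.trans hi)
    refine le_antisymm (not_lt.1 fun h => hgb.not_gt ?_) (not_lt.1 fun h => hag.not_gt ?_)
    · exact Lex.lt_iff.2
        ⟨i, fun j hj => (hb j (hj.trans hi)).trans (hlt j hj).symm, (hb i hi).trans_lt h⟩
    · exact Lex.lt_iff.2
        ⟨i, fun j hj => (hlt j hj).trans (ha j (hj.trans hi)).symm, h.trans_eq (ha i hi).symm⟩

theorem exists_preimage_cylinder_subset_Ioi {a f : Lex (ℕ →₀ N)} (h : a < f) :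
    ∃ n, toPi ⁻¹' cylinder (toPi f) n ⊆ Ioi a := by
  obtain ⟨i, hi, hlt⟩ := Lex.lt_iff.1 h
  exact ⟨i + 1, fun g hg => Lex.lt_iff.2 ⟨i, fun j hj => (hi j hj).trans (hg j (by omega)).symm,
    hlt.trans_eq (hg i i.lt_succ_self).symm⟩⟩

theorem exists_preimage_cylinder_subset_Iio {f b : Lex (ℕ →₀ N)} (h : f < b) :
    ∃ n, toPi ⁻¹' cylinder (toPi f) n ⊆ Iio b := by
  obtain ⟨i, hi, hlt⟩ := Lex.lt_iff.1 h
  exact ⟨i + 1, fun g hg => Lex.lt_iff.2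
    ⟨i, fun j hj => (hg j (by omega)).trans (hi j hj), (hg i i.lt_succ_self).trans_lt hlt⟩⟩

theorem single_pos {n : ℕ} {k : N} (hk : 0 < k) : 0 < toLex (single n k) :=
  Lex.lt_iff.2 ⟨n, fun j hj => by simp [hj.ne'], by simpa⟩

end LinearOrder

instance : DenselyOrdered (Lex (ℕ →₀ ℤ)) where
  dense a b hab := by
    obtain ⟨i, hi, hlt⟩ := Lex.lt_iff.1 hab
    refine ⟨a + toLex (single (i + 1) 1), lt_add_of_pos_right a (single_pos one_pos),
      Lex.lt_iff.2 ⟨i, fun j hj => ?_, ?_⟩⟩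
    · simpa [single_apply, (hj.trans i.lt_succ_self).ne] using hi j hj
    · simpa [single_apply] using hlt

instance : Countable (Lex (ℕ →₀ ℤ)) := inferInstanceAs (Countable (ℕ →₀ ℤ))

end Finsupp.Lex

section OrderTopology

noncomputable local instance : TopologicalSpace (Lex (ℕ →₀ ℤ)) := Preorder.topology _

local instance : OrderTopology (Lex (ℕ →₀ ℤ)) := ⟨rfl⟩

theorem Finsupp.Lex.isEmbedding_toPi : IsEmbedding (toPi (N := ℤ)) := by
  refine ⟨isInducing_iff_nhds.2 fun f => (nhds_basis_Ioo f).ext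
    ((hasBasis_nhds_cylinder _).comap toPi) ?_ ?_, toPi_injective⟩
  · rintro ⟨a, b⟩ ⟨ha, hb⟩
    obtain ⟨m, hm⟩ := exists_preimage_cylinder_subset_Ioi ha
    obtain ⟨n, hn⟩ := exists_preimage_cylinder_subset_Iio hb
    exact ⟨max m n, trivial, fun g hg =>
      ⟨hm (cylinder_anti _ (le_max_left m n) hg), hn (cylinder_anti _ (le_max_right m n) hg)⟩⟩
  · intro n _
    have hpos : 0 < toLex (single n (1 : ℤ)) := single_pos one_pos
    refine ⟨(f - toLex (single n 1), f + toLex (single n 1)),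
      ⟨sub_lt_self f hpos, lt_add_of_pos_right f hpos⟩, ?_⟩
    exact Ioo_subset_Icc_self.trans <| (ordConnected_preimage_cylinder _ n).out
      (fun i hi => by simp [toPi, hi.ne']) (fun i hi => by simp [toPi, hi.ne'])

noncomputable def Finsupp.Lex.interleaveHomeomorph :
    Lex (ℕ →₀ ℤ) × Lex (ℕ →₀ ℤ) ≃ₜ Lex (ℕ →₀ ℤ) :=
  interleave.toHomeomorphOfIsInducing <| by
    have hcomm : toPi ∘ interleave = (Homeomorph.sumArrowHomeomorphProdArrow.symm.trans
        (Homeomorph.piCongrLeft (Y := fun _ => ℤ) Equiv.natSumNatEquivNat)) ∘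
          Prod.map toPi toPi := by
      ext p m
      obtain ⟨s, rfl⟩ := Equiv.natSumNatEquivNat.surjective m
      simp [toPi_interleave, -Equiv.natSumNatEquivNat_apply]
    have hind := isEmbedding_toPi.isInducing
    rw [← hind.of_comp_iff, hcomm]
    exact (Homeomorph.isInducing _).comp (hind.prodMap hind)

theorem nonempty_prod_self_homeomorph_of_countable_dense (X : Type*) [LinearOrder X]
    [TopologicalSpace X] [OrderTopology X] [Countable X] [DenselyOrdered X] [NoMinOrder X]
    [NoMaxOrder X] [Nonempty X] : Nonempty (X × X ≃ₜ X) := by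
  obtain ⟨e⟩ := Order.iso_of_countable_dense X (Lex (ℕ →₀ ℤ))
  exact ⟨(e.toHomeomorph.prodCongr e.toHomeomorph).trans
    (Finsupp.Lex.interleaveHomeomorph.trans e.toHomeomorph.symm)⟩

end OrderTopology

/-- `ℚ × ℚ` with the product topology is homeomorphic to `ℚ ×ₗ ℚ` with the order topology
of the lexicographic order. -/
theorem stmt_2 :
    letI : TopologicalSpace (ℚ ×ₗ ℚ) := lexTop ℚ ℚ
    Nonempty ((ℚ × ℚ) ≃ₜ (ℚ ×ₗ ℚ)) := by
  let _ : TopologicalSpace (ℚ ×ₗ ℚ) := lexTop ℚ ℚ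
  have : OrderTopology (ℚ ×ₗ ℚ) := ⟨rfl⟩
  have : Countable (ℚ ×ₗ ℚ) := inferInstanceAs (Countable (ℚ × ℚ))
  obtain ⟨h⟩ := nonempty_prod_self_homeomorph_of_countable_dense ℚ
  obtain ⟨e⟩ := Order.iso_of_countable_dense ℚ (ℚ ×ₗ ℚ)
  exact ⟨h.trans e.toHomeomorph⟩
end

section
/- Let D be any topological space whose topology is discrete. Then there exists a linear order ≺ on D that is topology-compatible (the order topology of ≺ is the discrete topology of D) such that D × D with the product topology is homeomorphic to D × D equipped with the lexicographic order induced by ≺ and the order topology of that lexicographic order. -/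
theorem Preorder.topology_eq_bot_of_finite (α : Type*) [LinearOrder α] [Finite α] :
    Preorder.topology α = ⊥ := by
  let _ := Preorder.topology α
  have : OrderTopology α := ⟨rfl⟩
  exact DiscreteTopology.eq_bot

theorem Preorder.topology_eq_bot_of_forall_covBy {α : Type*} [LinearOrder α]
    (h : ∀ x : α, (∃ y, y ⋖ x) ∧ ∃ z, x ⋖ z) : Preorder.topology α = ⊥ := by
  let _ := Preorder.topology α
  have : OrderTopology α := ⟨rfl⟩
  refine eq_bot_of_singletons_open fun x => ?_
  obtain ⟨⟨y, hyx⟩, z, hxz⟩ := h x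
  have hx : Set.Ioo y z = {x} := by
    rw [← Set.Ioi_inter_Iio, hyx.Ioi_eq, hxz.Iio_eq, Set.Ici_inter_Iic, Set.Icc_self]
  exact hx ▸ isOpen_Ioo

theorem Prod.Lex.forall_covBy {α β : Type*} [Preorder α] [Preorder β]
    (h : ∀ b : β, (∃ b', b' ⋖ b) ∧ ∃ b', b ⋖ b') :
    ∀ x : α ×ₗ β, (∃ y, y ⋖ x) ∧ ∃ z, x ⋖ z := by
  intro x
  obtain ⟨⟨b₁, hb₁⟩, b₂, hb₂⟩ := h (ofLex x).2
  exact ⟨⟨toLex ((ofLex x).1, b₁), toLex_covBy_toLex_iff.2 (.inl ⟨rfl, hb₁⟩)⟩,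
    toLex ((ofLex x).1, b₂), toLex_covBy_toLex_iff.2 (.inl ⟨rfl, hb₂⟩)⟩

theorem Equiv.exists_linearOrder_forall_covBy {α β : Type*} [LinearOrder β] (e : α ≃ β)
    (h : ∀ b : β, (∃ b', b' ⋖ b) ∧ ∃ b', b ⋖ b') :
    ∃ _ : LinearOrder α, ∀ x : α, (∃ y, y ⋖ x) ∧ ∃ z, x ⋖ z := by
  let lo : LinearOrder α := LinearOrder.lift' e e.injective
  let f : α ≃o β := { e with map_rel_iff' := Iff.rfl }
  refine ⟨lo, fun x => ?_⟩
  obtain ⟨⟨y, hy⟩, z, hz⟩ := h (f x)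
  refine ⟨⟨f.symm y, ?_⟩, f.symm z, ?_⟩
  · rwa [← apply_covBy_apply_iff f, f.apply_symm_apply]
  · rwa [← apply_covBy_apply_iff f, f.apply_symm_apply]

theorem exists_linearOrder_forall_covBy (α : Type*) [Infinite α] :
    ∃ _ : LinearOrder α, ∀ x : α, (∃ y, y ⋖ x) ∧ ∃ z, x ⋖ z := by
  obtain ⟨e⟩ : Nonempty (α ≃ α × ℤ) := by
    rw [← Cardinal.eq, Cardinal.mk_prod, Cardinal.mk_int, Cardinal.lift_aleph0,
      Cardinal.lift_uzero, Cardinal.mul_aleph0_eq (Cardinal.aleph0_le_mk α)]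
  let _ : LinearOrder α := IsWellOrder.linearOrder WellOrderingRel
  have hℤ : ∀ n : ℤ, (∃ m, m ⋖ n) ∧ ∃ m, n ⋖ m := fun n =>
    ⟨⟨n - 1, Order.sub_one_covBy n⟩, n + 1, Order.covBy_add_one n⟩
  exact (e.trans toLex).exists_linearOrder_forall_covBy (Prod.Lex.forall_covBy hℤ)

theorem exists_linearOrder_topology_eq_bot_and_lexTop_eq_bot (α : Type*) :
    ∃ _ : LinearOrder α, Preorder.topology α = ⊥ ∧ lexTop α α = ⊥ := by
  cases finite_or_infinite α with
  | inl _ =>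
    let _ : LinearOrder α := IsWellOrder.linearOrder WellOrderingRel
    have : Finite (α ×ₗ α) := .of_equiv (α × α) toLex
    exact ⟨inferInstance, Preorder.topology_eq_bot_of_finite α,
      Preorder.topology_eq_bot_of_finite (α ×ₗ α)⟩
  | inr _ =>
    obtain ⟨lo, h⟩ := exists_linearOrder_forall_covBy α
    exact ⟨lo, Preorder.topology_eq_bot_of_forall_covBy h,
      Preorder.topology_eq_bot_of_forall_covBy (Prod.Lex.forall_covBy h)⟩

/-- For any discrete topological space `D` there is a topology-compatible linear order `≺`
on `D` such that `D × D` with the product topology is homeomorphic to `D ×ₗ D` (lex order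
from `≺`) with the order topology. -/
theorem stmt_5 (D : Type*) [t : TopologicalSpace D] [DiscreteTopology D] :
    ∃ lo : LinearOrder D,
      @Preorder.topology D lo.toPreorder = t ∧
      Nonempty (@Homeomorph (D × D) (D ×ₗ D) instTopologicalSpaceProd (@lexTop D D lo lo)) := by
  obtain ⟨lo, hD, hlex⟩ := exists_linearOrder_topology_eq_bot_and_lexTop_eq_bot D
  let _ : TopologicalSpace (D ×ₗ D) := lexTop D D
  have : DiscreteTopology (D ×ₗ D) := ⟨hlex⟩
  exact ⟨lo, hD.trans DiscreteTopology.eq_bot.symm, ⟨toLex.toHomeomorphOfDiscrete⟩⟩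
end

section
/- Let D be a discrete topological space of cardinality ℵ₁, let W = {α : α ≤ ω} be the set of ordinals at most ω with its subspace topology from the ordinals, and let X be the topological disjoint sum W ⊕ D. Then X is orderable: there exists a linear order on X whose order topology equals the topology of X. -/
/-- `W = {α : α ≤ ω}` with the subspace topology from the ordinals. -/
abbrev Wspace : Type 1 := {α : Ordinal // α ≤ Ordinal.omega0}

/-!
Order `X` lexicographically as `W` followed by `D`, where `D` is ordered like `ℕ ⊕ₗ (ι ×ₗ ℤ)`
for a linear order `ι` of the same (infinite) cardinality. In that order every point of `D` has
an immediate successor and, unless it is the least one, an immediate predecessor, so the order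
topology on `D` is discrete. Since `W` has a greatest element `ω` and `D` a least one, each
summand of the lexicographic sum is an open order-convex subset, so the order topology of the
sum is the disjoint-sum topology.
-/

open Cardinal Set Order Topology

theorem Cardinal.mk_nat_sum_prod_int {ι : Type*} (h : ℵ₀ ≤ #ι) : #(ℕ ⊕ ι × ℤ) = #ι := by
  simp [mul_aleph0_eq h, add_eq_right h h]

namespace Prod.Lex

variable {α β : Type*} [Preorder α] [Preorder β]

instance succOrder [SuccOrder β] [NoMaxOrder β] : SuccOrder (α ×ₗ β) :=
  .ofSuccLeIff (fun x => toLex ((ofLex x).1, succ (ofLex x).2)) fun {_ _} => by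
    simp [Prod.Lex.le_iff, Prod.Lex.lt_iff]

instance predOrder [PredOrder β] [NoMinOrder β] : PredOrder (α ×ₗ β) :=
  .ofPredLeIff (fun x => toLex ((ofLex x).1, pred (ofLex x).2)) fun {_ _} => by
    simp [Prod.Lex.le_iff, Prod.Lex.lt_iff]

end Prod.Lex

namespace Sum.Lex

section SuccPred

variable {α β : Type*} [Preorder α] [Preorder β]

instance succOrder [SuccOrder α] [NoMaxOrder α] [SuccOrder β] : SuccOrder (α ⊕ₗ β) where
  succ x := toLex ((ofLex x).map succ succ)
  le_succ := by
    rw [Lex.forall]; rintro (a | b) <;> simp [le_succ]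
  max_of_succ_le := by
    rw [Lex.forall]; rintro (a | b) h
    · simp at h
    · simp only [ofLex_toLex, map_inr, inr_le_inr_iff] at h
      rw [IsMax, Lex.forall]; rintro (a' | b') h'
      · simp at h'
      · simpa using max_of_succ_le h (by simpa using h')
  succ_le_of_lt := by
    rw [Lex.forall]; intro x; rw [Lex.forall]; intro y
    rcases x with a | a <;> rcases y with b | b <;> simp
    exact Order.succ_le_of_lt

instance predOrder [PredOrder α] [PredOrder β] [NoMinOrder β] : PredOrder (α ⊕ₗ β) where
  pred x := toLex ((ofLex x).map pred pred)
  pred_le := by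
    rw [Lex.forall]; rintro (a | b) <;> simp [pred_le]
  min_of_le_pred := by
    rw [Lex.forall]; rintro (a | b) h
    · simp only [ofLex_toLex, map_inl, inl_le_inl_iff] at h
      rw [IsMin, Lex.forall]; rintro (a' | b') h'
      · simpa using min_of_le_pred h (by simpa using h')
      · simp at h'
    · simp at h
  le_pred_of_lt := by
    rw [Lex.forall]; intro x; rw [Lex.forall]; intro y
    rcases x with a | a <;> rcases y with b | b <;> simp
    exact Order.le_pred_of_lt

end SuccPred

theorem range_inl_eq_Iio {α β : Type*} [Preorder α] [Preorder β] [OrderBot β] :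
    range (toLex ∘ inl : α → α ⊕ₗ β) = Iio (toLex (inr ⊥)) := by
  ext x; induction x using _root_.Lex.rec with | h x => ?_
  rcases x with a | b <;> simp

theorem range_inr_eq_Ioi {α β : Type*} [Preorder α] [Preorder β] [OrderTop α] :
    range (toLex ∘ inr : β → α ⊕ₗ β) = Ioi (toLex (inl ⊤)) := by
  ext x; induction x using _root_.Lex.rec with | h x => ?_
  rcases x with a | b <;> simp

theorem isOpenEmbedding_inl {α β : Type*} [LinearOrder α] [TopologicalSpace α] [OrderTopology α]
    [LinearOrder β] [OrderBot β] [TopologicalSpace (α ⊕ₗ β)] [OrderTopology (α ⊕ₗ β)] :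
    IsOpenEmbedding (toLex ∘ inl : α → α ⊕ₗ β) :=
  ⟨inl_strictMono.isEmbedding_of_ordConnected
      (range_inl_eq_Iio (α := α) (β := β) ▸ ordConnected_Iio),
    range_inl_eq_Iio (α := α) (β := β) ▸ isOpen_Iio⟩

theorem isOpenEmbedding_inr {α β : Type*} [LinearOrder α] [OrderTop α]
    [LinearOrder β] [TopologicalSpace β] [OrderTopology β]
    [TopologicalSpace (α ⊕ₗ β)] [OrderTopology (α ⊕ₗ β)] :
    IsOpenEmbedding (toLex ∘ inr : β → α ⊕ₗ β) :=
  ⟨inr_strictMono.isEmbedding_of_ordConnected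
      (range_inr_eq_Ioi (α := α) (β := β) ▸ ordConnected_Ioi),
    range_inr_eq_Ioi (α := α) (β := β) ▸ isOpen_Ioi⟩

theorem preorderTopology_eq_instTopologicalSpaceSum {α β : Type*}
    [LinearOrder α] [TopologicalSpace α] [OrderTopology α] [OrderTop α]
    [LinearOrder β] [TopologicalSpace β] [OrderTopology β] [OrderBot β] :
    Preorder.topology (α ⊕ₗ β) = (inferInstance : TopologicalSpace (α ⊕ β)) := by
  let _ : TopologicalSpace (α ⊕ₗ β) := Preorder.topology _
  have : OrderTopology (α ⊕ₗ β) := ⟨rfl⟩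
  have h := (isOpenEmbedding_inl (α := α) (β := β)).sumElim isOpenEmbedding_inr
    (by simp [Function.Injective])
  rw [Sum.elim_comp_inl_inr] at h
  exact (h.eq_induced.trans (@induced_id _ (Preorder.topology (α ⊕ₗ β)))).symm

end Sum.Lex

theorem DiscreteTopology.exists_linearOrder_orderBot_orderTopology (D : Type*) [TopologicalSpace D]
    [DiscreteTopology D] (hD : ℵ₀ ≤ #D) :
    ∃ (_ : LinearOrder D) (_ : OrderBot D), OrderTopology D := by
  let ι := (#D).ord.ToType
  have hι : #ι = #D := by simp [ι]
  obtain ⟨e⟩ : Nonempty (D ≃ ℕ ⊕ₗ (ι ×ₗ ℤ)) :=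
    Cardinal.eq.1 ((mk_nat_sum_prod_int (hι ▸ hD)).trans hι).symm
  let _ : LinearOrder D := LinearOrder.lift' e e.injective
  let eo : D ≃o ℕ ⊕ₗ (ι ×ₗ ℤ) := ⟨e, Iff.rfl⟩
  let _ : SuccOrder D := .ofOrderIso eo.symm
  let _ : PredOrder D := .ofOrderIso eo.symm
  exact ⟨_, { bot := eo.symm ⊥, bot_le _ := eo.symm_apply_le.2 bot_le }, .of_discreteTopology⟩

/-- If `D` is discrete of cardinality `ℵ₁`, then `X = W ⊕ D` is orderable: some linear
order on `X` induces exactly the (sum) topology of `X`. -/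
theorem stmt_6 (D : Type*) [TopologicalSpace D] [DiscreteTopology D]
    (hD : Cardinal.mk D = Cardinal.aleph 1) :
    ∃ lo : LinearOrder (Wspace ⊕ D),
      @Preorder.topology (Wspace ⊕ D) lo.toPreorder =
        (inferInstance : TopologicalSpace (Wspace ⊕ D)) := by
  obtain ⟨_, _, _⟩ :=
    DiscreteTopology.exists_linearOrder_orderBot_orderTopology D (hD ▸ aleph0_le_aleph 1)
  have : OrderTopology Wspace := inferInstanceAs (OrderTopology (Iic Ordinal.omega0))
  have : OrderTop Wspace := inferInstanceAs (OrderTop (Iic Ordinal.omega0))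
  exact ⟨Sum.Lex.linearOrder, Sum.Lex.preorderTopology_eq_instTopologicalSpaceSum⟩
end

section
/- Let D be a discrete topological space of cardinality ℵ₁, let W = {α : α ≤ ω} be the set of ordinals at most ω with its subspace topology from the ordinals, and let X be the topological disjoint sum W ⊕ D. Then for EVERY topology-compatible linear order ≺ on X, the space X × X with the product topology is NOT homeomorphic to X × X equipped with the lexicographic order induced by ≺ and the order topology of that lexicographic order. -/
/-! The point `(ω, ω)` of `X × X` has a countable neighbourhood and is a limit of the
non-isolated points `(z, ω)`. In `X ×ₗ X` no point with a countable neighbourhood is such a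
limit. A countable order-convex neighbourhood contains no whole fibre `{x} ×ₗ X`, since `X` is
uncountable, so it meets at most two fibres (a fibre strictly between two others would lie
inside it). Inside a fibre, `(x, y)` is isolated as soon as `y` is isolated and neither least
nor greatest in `X`, and only finitely many `y` fail this. -/

open Set Filter Topology

section LexProduct

variable {α β : Type*} [LinearOrder α] [LinearOrder β]

theorem Set.OrdConnected.toLex_mem_of_lt_of_lt {I : Set (α ×ₗ β)} (hI : I.OrdConnected)
    {x₁ x x₃ : α} {y₁ y₃ : β} (h₁ : toLex (x₁, y₁) ∈ I) (h₃ : toLex (x₃, y₃) ∈ I)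
    (hx₁ : x₁ < x) (hx₃ : x < x₃) (y : β) : toLex (x, y) ∈ I :=
  hI.out h₁ h₃ ⟨(Prod.Lex.toLex_lt_toLex.2 (Or.inl hx₁)).le,
    (Prod.Lex.toLex_lt_toLex.2 (Or.inl hx₃)).le⟩

theorem Set.OrdConnected.finite_fst_of_forall_exists_notMem {I : Set (α ×ₗ β)}
    (hI : I.OrdConnected) (hfib : ∀ x, ∃ y, toLex (x, y) ∉ I) :
    {x | ∃ y, toLex (x, y) ∈ I}.Finite := by
  set F := {x | ∃ y, toLex (x, y) ∈ I}
  have hsub : F ⊆ {x | IsLeast F x} ∪ {x | IsGreatest F x} := by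
    intro x hx
    by_contra h
    simp only [mem_union, not_or] at h
    obtain ⟨x₁, ⟨y₁, h₁⟩, hx₁⟩ : ∃ x₁ ∈ F, x₁ < x := by
      simpa [IsLeast, hx, lowerBounds] using h.1
    obtain ⟨x₃, ⟨y₃, h₃⟩, hx₃⟩ : ∃ x₃ ∈ F, x < x₃ := by
      simpa [IsGreatest, hx, upperBounds] using h.2
    obtain ⟨y, hy⟩ := hfib x
    exact hy (hI.toLex_mem_of_lt_of_lt h₁ h₃ hx₁ hx₃ y)
  refine (Set.Finite.union ?_ ?_).subset hsub
  · exact Set.Subsingleton.finite fun a ha b hb => ha.unique hb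
  · exact Set.Subsingleton.finite fun a ha b hb => ha.unique hb

variable [TopologicalSpace β] [OrderTopology β] [TopologicalSpace (α ×ₗ β)]
  [OrderTopology (α ×ₗ β)]

theorem Prod.Lex.isOpen_singleton_toLex {x : α} {y : β} (hy : IsOpen {y}) (hmin : ¬IsMin y)
    (hmax : ¬IsMax y) : IsOpen {toLex (x, y)} := by
  obtain ⟨l, u, ⟨hl, hu⟩, hlu⟩ := (mem_nhds_iff_exists_Ioo_subset' (not_isMin_iff.1 hmin)
    (not_isMax_iff.1 hmax)).1 (hy.mem_nhds rfl)
  have hl' : toLex (x, l) < toLex (x, y) := Prod.Lex.toLex_lt_toLex.2 (Or.inr ⟨rfl, hl⟩)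
  have hu' : toLex (x, y) < toLex (x, u) := Prod.Lex.toLex_lt_toLex.2 (Or.inr ⟨rfl, hu⟩)
  refine isOpen_iff_mem_nhds.2 fun z hz => ?_
  rw [mem_singleton_iff.1 hz]
  refine mem_of_superset (Ioo_mem_nhds hl' hu') fun z ⟨hlz, hzu⟩ => ?_
  rw [Prod.Lex.lt_iff'] at hlz hzu
  have hfst : (ofLex z).1 = x := le_antisymm hzu.1 hlz.1
  have hsnd : (ofLex z).2 = y := hlu ⟨hlz.2 hfst.symm, hzu.2 hfst⟩
  exact congrArg toLex (Prod.ext hfst hsnd)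

theorem Prod.Lex.eventually_isOpen_singleton_of_countable_mem_nhds [Uncountable β]
    (hβ : {y : β | ¬IsOpen {y}}.Finite) {q : α ×ₗ β} {U : Set (α ×ₗ β)} (hU : U ∈ 𝓝 q)
    (hUc : U.Countable) :
    ∀ᶠ z in 𝓝[≠] q, IsOpen ({z} : Set (α ×ₗ β)) := by
  obtain ⟨b, c, -, hI, hIU⟩ := exists_Icc_mem_subset_of_mem_nhds hU
  have hfib : ∀ x, ∃ y, toLex (x, y) ∉ Icc b c := by
    intro x
    by_contra! h
    have hinj : Function.Injective fun y : β => toLex (x, y) := fun y y' hyy' =>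
      congrArg (fun z => (ofLex z).2) hyy'
    refine not_countable (α := β) (Set.countable_univ_iff.1 ?_)
    exact (hUc.preimage hinj).mono fun y _ => hIU (h y)
  have hF := ordConnected_Icc.finite_fst_of_forall_exists_notMem hfib
  have hS : ({y : β | ¬IsOpen {y}} ∪ {y | IsMin y} ∪ {y | IsMax y}).Finite :=
    (hβ.union ((Set.subsingleton_isBot β).anti fun _ => isBot_iff_isMin.2).finite).union
      ((Set.subsingleton_isTop β).anti fun _ => isTop_iff_isMax.2).finite
  set B := {z ∈ Icc b c | ¬IsOpen ({z} : Set (α ×ₗ β))}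
  have hB : B.Finite := by
    refine ((hF.prod hS).image toLex).subset fun z ⟨hzI, hz⟩ => ⟨ofLex z, ⟨⟨_, hzI⟩, ?_⟩, rfl⟩
    by_contra hzS
    simp only [mem_union, not_or] at hzS
    exact hz (Prod.Lex.isOpen_singleton_toLex (not_not.1 hzS.1.1) hzS.1.2 hzS.2)
  have hBq : (B \ {q})ᶜ ∈ 𝓝 q := hB.sdiff.isClosed.compl_mem_nhds fun h => h.2 rfl
  filter_upwards [nhdsWithin_le_nhds hI, nhdsWithin_le_nhds hBq, self_mem_nhdsWithin]
    with z hzI hzB hzq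
  by_contra hz
  exact hzB ⟨⟨hzI, hz⟩, hzq⟩

end LexProduct

section NonIsolated

variable {X Y : Type*} [TopologicalSpace X] [TopologicalSpace Y]

theorem not_isOpen_singleton_prod_of_right {y : Y} (hy : ¬IsOpen {y}) (x : X) :
    ¬IsOpen ({(x, y)} : Set (X × Y)) := fun h =>
  hy <| by
    convert h.preimage (Continuous.prodMk_right x)
    ext; simp

theorem frequently_not_isOpen_singleton_prod {x : X} {y : Y} (hx : ¬IsOpen {x})
    (hy : ¬IsOpen {y}) : ∃ᶠ z in 𝓝[≠] (x, y), ¬IsOpen ({z} : Set (X × Y)) := by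
  have : (𝓝[≠] x).NeBot := ⟨(isOpen_singleton_iff_punctured_nhds x).not.1 hx⟩
  have hmaps : Tendsto (fun x' => (x', y)) (𝓝[≠] x) (𝓝[≠] (x, y)) :=
    (continuous_id.prodMk continuous_const).continuousWithinAt.tendsto_nhdsWithin
      fun x' hx' h => hx' (congrArg Prod.fst h)
  exact hmaps.frequently
    (Eventually.of_forall fun x' => not_isOpen_singleton_prod_of_right hy x').frequently

theorem Homeomorph.frequently_not_isOpen_singleton (e : X ≃ₜ Y) {x : X}
    (h : ∃ᶠ z in 𝓝[≠] x, ¬IsOpen ({z} : Set X)) :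
    ∃ᶠ z in 𝓝[≠] e x, ¬IsOpen ({z} : Set Y) := by
  rw [← e.map_punctured_nhds_eq, frequently_map]
  simpa only [← image_singleton, e.isOpen_image] using h

theorem Sum.isOpen_singleton_inl_iff {x : X} : IsOpen ({Sum.inl x} : Set (X ⊕ Y)) ↔ IsOpen {x} := by
  rw [(IsOpenEmbedding.inl (X := X) (Y := Y)).isOpen_iff_image_isOpen, image_singleton]

end NonIsolated

instance Wspace.instCountable : Countable Wspace := by
  refine Set.Countable.to_subtype (s := Iic Ordinal.omega0) ?_
  refine ((countable_range ((↑) : ℕ → Ordinal)).insert Ordinal.omega0).mono fun o ho => ?_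
  rcases (mem_Iic.1 ho).lt_or_eq with h | rfl
  · obtain ⟨n, rfl⟩ := Ordinal.lt_omega0.1 h
    exact mem_insert_of_mem _ (mem_range_self n)
  · exact mem_insert _ _

theorem Wspace.isOpen_singleton_iff {w : Wspace} : IsOpen {w} ↔ w.1 ≠ Ordinal.omega0 := by
  constructor
  · rintro hw hωw
    obtain ⟨T, hT, hTw⟩ := isOpen_induced_iff.1 hw
    have hωT : Ordinal.omega0 ∈ T := hωw ▸ show w ∈ Subtype.val ⁻¹' T from hTw ▸ rfl
    obtain ⟨a, ha, haT⟩ := SuccOrder.isOpen_iff.1 hT _ hωT Ordinal.isSuccLimit_omega0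
    have hsucc : Order.succ a < Ordinal.omega0 := Ordinal.isSuccLimit_omega0.succ_lt ha
    have : (⟨Order.succ a, hsucc.le⟩ : Wspace) ∈ Subtype.val ⁻¹' T :=
      haT ⟨Order.lt_succ_of_not_isMax (not_isMax a), hsucc⟩
    rw [hTw, mem_singleton_iff, Subtype.ext_iff] at this
    exact hsucc.ne (this.trans hωw)
  · intro hw
    have hnlim : ¬Order.IsSuccLimit w.1 := fun h =>
      hw (le_antisymm w.2 (Ordinal.omega0_le_of_isSuccLimit h))
    convert (SuccOrder.isOpen_singleton_iff.2 hnlim).preimage continuous_subtype_val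
    ext; simp [Subtype.ext_iff]

/-- If `D` is discrete of cardinality `ℵ₁` and `X = W ⊕ D`, then for every
topology-compatible linear order `≺` on `X`, the space `X × X` (product topology) is NOT
homeomorphic to `X ×ₗ X` (lex order from `≺`) with the order topology. -/
theorem stmt_7 (D : Type*) [TopologicalSpace D] [DiscreteTopology D]
    (hD : Cardinal.mk D = Cardinal.aleph 1)
    (lo : LinearOrder (Wspace ⊕ D))
    (hcompat : @Preorder.topology (Wspace ⊕ D) lo.toPreorder =
      (inferInstance : TopologicalSpace (Wspace ⊕ D))) :
    ¬ Nonempty (@Homeomorph ((Wspace ⊕ D) × (Wspace ⊕ D)) ((Wspace ⊕ D) ×ₗ (Wspace ⊕ D))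
      instTopologicalSpaceProd (@lexTop _ _ lo lo)) := by
  rintro ⟨e⟩
  let := lo
  have : OrderTopology (Wspace ⊕ D) := ⟨hcompat.symm⟩
  let := lexTop (Wspace ⊕ D) (Wspace ⊕ D)
  have : OrderTopology ((Wspace ⊕ D) ×ₗ (Wspace ⊕ D)) := ⟨rfl⟩
  have : Uncountable D := Cardinal.aleph0_lt_mk_iff.1 (hD ▸ Cardinal.aleph0_lt_aleph_one)
  set p : Wspace ⊕ D := Sum.inl ⟨Ordinal.omega0, le_rfl⟩
  have hp : ¬IsOpen {p} := by
    simp [p, Sum.isOpen_singleton_inl_iff, Wspace.isOpen_singleton_iff]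
  have hX : {z : Wspace ⊕ D | ¬IsOpen {z}} ⊆ {p} := by
    rintro (w | d) hz
    · rw [mem_ofPred, Sum.isOpen_singleton_inl_iff, Wspace.isOpen_singleton_iff, not_not] at hz
      exact congrArg Sum.inl (Subtype.ext hz)
    · exact absurd (by simpa using isOpenMap_inr _ (isOpen_discrete {d})) hz
  set W : Set (Wspace ⊕ D) := range Sum.inl
  have hU : W ×ˢ W ∈ 𝓝 (p, p) :=
    (isOpen_range_inl.prod isOpen_range_inl).mem_nhds ⟨mem_range_self _, mem_range_self _⟩
  have hUc : (W ×ˢ W).Countable := (countable_range _).prod (countable_range _)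
  have hprod : ∃ᶠ z in 𝓝[≠] e (p, p), ¬IsOpen {z} :=
    e.frequently_not_isOpen_singleton (frequently_not_isOpen_singleton_prod hp hp)
  have hlex : ∀ᶠ z in 𝓝[≠] e (p, p), IsOpen {z} :=
    Prod.Lex.eventually_isOpen_singleton_of_countable_mem_nhds ((finite_singleton p).subset hX)
      (e.isOpenMap.image_mem_nhds hU) (hUc.image e)
  obtain ⟨z, hz, hz'⟩ := (hprod.and_eventually hlex).exists
  exact hz hz'
end

section
/- Let X be a set of ordinals, carrying the subspace topology inherited from the order topology on the ordinals, and suppose X is homogeneous on its derived set X'. Then for every x ∈ X' there exists α ∈ X with α < x such that x is the unique non-isolated point of the subspace [α, x] ∩ X = {y ∈ X : α ≤ y ≤ x}. -/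
/-!
The least non-isolated point `m` of `X` is isolated in `X'`, since `X ∩ [0, m]` is a
neighbourhood of it. A homeomorphism swapping `m` and `x` transports this to `x`: some
`X ∩ (β, x]` contains no non-isolated point other than `x`. As `x` is a limit of points of `X`
from the left, there is `α ∈ X ∩ (β, x)`, and `X ∩ [α, x]` is a neighbourhood of `x`
in `X`.
-/

/-- A point of a topological space is non-isolated if its singleton is not open. -/
def NonIsolated {Y : Type*} [TopologicalSpace Y] (y : Y) : Prop := ¬ IsOpen ({y} : Set Y)

/-- `Y` is homogeneous on a subset `A` if any two points of `A` can be swapped by a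
self-homeomorphism of `Y`. -/
def HomogeneousOn (Y : Type*) [TopologicalSpace Y] (A : Set Y) : Prop :=
  ∀ x ∈ A, ∀ y ∈ A, ∃ f : Y ≃ₜ Y, f x = y ∧ f y = x

open Set Filter Topology Order

section Topology

variable {Y : Type*} [TopologicalSpace Y]

theorem nonIsolated_iff_singleton_notMem_nhds {y : Y} : NonIsolated y ↔ {y} ∉ 𝓝 y := by
  rw [NonIsolated, isOpen_singleton_iff_nhds_eq_pure, ← (pure_le_nhds y).ge_iff_eq', le_pure_iff]

theorem Homeomorph.nonIsolated_apply_iff {Z : Type*} [TopologicalSpace Z] (f : Y ≃ₜ Z) {y : Y} :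
    NonIsolated (f y) ↔ NonIsolated y := by
  rw [NonIsolated, NonIsolated, ← image_singleton, f.isOpen_image]

theorem nonIsolated_subtype_iff {p : Y → Prop} {y : Subtype p}
    (hp : ∀ᶠ z in 𝓝 (y : Y), p z) : NonIsolated y ↔ NonIsolated (y : Y) := by
  simp only [nonIsolated_iff_singleton_notMem_nhds,
    mem_nhds_subtype_iff_nhdsWithin (s := {z | p z}), image_singleton, nhdsWithin_eq_nhds.mpr hp]

theorem NonIsolated.subtype_val {s : Set Y} {y : s} (hy : NonIsolated y) :
    NonIsolated (y : Y) := by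
  rw [nonIsolated_iff_singleton_notMem_nhds, mem_nhds_subtype_iff_nhdsWithin,
    image_singleton] at hy
  exact nonIsolated_iff_singleton_notMem_nhds.mpr fun h => hy (mem_nhdsWithin_of_mem_nhds h)

theorem HomogeneousOn.eventually_nonIsolated_imp_eq
    (hhom : HomogeneousOn Y {y | NonIsolated y}) {m x : Y} (hm : NonIsolated m)
    (hx : NonIsolated x) (hm_iso : ∀ᶠ z in 𝓝 m, NonIsolated z → z = m) :
    ∀ᶠ z in 𝓝 x, NonIsolated z → z = x := by
  obtain ⟨f, hfm, -⟩ := hhom m hm x hx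
  rw [← hfm, ← f.map_nhds_eq, eventually_map]
  filter_upwards [hm_iso] with z hz hfz
  rw [hz (f.nonIsolated_apply_iff.mp hfz)]

end Topology

namespace SuccOrder

variable {α : Type*} [LinearOrder α] [TopologicalSpace α] [OrderTopology α] [SuccOrder α]
  [NoMaxOrder α] {X : Set α}

theorem Iic_mem_nhds (a : α) : Iic a ∈ 𝓝 a :=
  Iio_succ a ▸ Iio_mem_nhds (lt_succ a)

theorem Iic_mem_nhds_subtype (x : X) : Iic x ∈ 𝓝 x :=
  continuous_subtype_val.continuousAt.preimage_mem_nhds (Iic_mem_nhds (x : α))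

theorem eventually_nonIsolated_imp_eq_of_forall_le {m : X}
    (hmin : ∀ z : X, NonIsolated z → m ≤ z) :
    ∀ᶠ z in 𝓝 m, NonIsolated z → z = m := by
  filter_upwards [Iic_mem_nhds_subtype m] with z hzm hz using le_antisymm hzm (hmin z hz)

theorem _root_.NonIsolated.exists_lt_mem_of_mem_nhds {x : X} (hx : NonIsolated x) {U : Set α}
    (hU : U ∈ 𝓝 (x : α)) : ∃ z : X, z < x ∧ (z : α) ∈ U := by
  by_contra! h
  refine nonIsolated_iff_singleton_notMem_nhds.mp hx ?_
  filter_upwards [Iic_mem_nhds_subtype x,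
    continuous_subtype_val.continuousAt.preimage_mem_nhds hU] with z hzx hzU
  exact eq_of_le_of_not_lt hzx fun hlt => h z hlt hzU

theorem exists_lt_forall_nonIsolated_iff {x : X} (hx : NonIsolated x)
    (hx_iso : ∀ᶠ z in 𝓝 x, NonIsolated z → z = x) :
    ∃ a : X, (a : α) < (x : α) ∧
      ∀ y : {z : X // (a : α) ≤ (z : α) ∧ (z : α) ≤ (x : α)},
        NonIsolated y ↔ (y : X) = x := by
  obtain ⟨U, hU, hU_iso⟩ := (mem_nhds_subtype X x _).mp hx_iso
  obtain ⟨b, hbx, -⟩ := hx.exists_lt_mem_of_mem_nhds univ_mem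
  obtain ⟨c, hcx, hcU⟩ := exists_Ioc_subset_of_mem_nhds hU ⟨b, hbx⟩
  obtain ⟨a, hax, hca⟩ := hx.exists_lt_mem_of_mem_nhds (Ioi_mem_nhds hcx)
  refine ⟨a, hax, fun y => ⟨fun hy => ?_, fun hy => ?_⟩⟩
  · exact hU_iso (hcU ⟨hca.trans_le y.2.1, y.2.2⟩) hy.subtype_val
  · have hS : ∀ᶠ z : X in 𝓝 x, (a : α) ≤ z ∧ z ≤ x := inter_mem
      (continuous_subtype_val.continuousAt.preimage_mem_nhds (Ici_mem_nhds hax))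
      (Iic_mem_nhds_subtype x)
    obtain rfl : y = ⟨x, hax.le, le_rfl⟩ := Subtype.ext hy
    exact (nonIsolated_subtype_iff hS).mpr hx

end SuccOrder

/-- If a set of ordinals `X` (subspace topology) is homogeneous on its derived set, then
for every non-isolated point `x` there is `α ∈ X`, `α < x`, such that `x` is the unique
non-isolated point of the subspace `[α, x] ∩ X`. -/
theorem stmt_8 (X : Set Ordinal)
    (hhom : HomogeneousOn ↥X {x : ↥X | NonIsolated x})
    (x : ↥X) (hx : NonIsolated x) :
    ∃ α : ↥X, (α : Ordinal) < (x : Ordinal) ∧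
      ∀ y : {z : ↥X // (α : Ordinal) ≤ (z : Ordinal) ∧ (z : Ordinal) ≤ (x : Ordinal)},
        (NonIsolated y ↔ (y : ↥X) = x) := by
  obtain ⟨m, hm, hmin⟩ := wellFounded_lt.has_min {z : X | NonIsolated z} ⟨x, hx⟩
  have hm_iso := SuccOrder.eventually_nonIsolated_imp_eq_of_forall_le
    fun z hz => not_lt.mp (hmin z hz)
  exact SuccOrder.exists_lt_forall_nonIsolated_iff hx
    (hhom.eventually_nonIsolated_imp_eq hm hx hm_iso)
end

section
/- Let X be a set of ordinals, carrying the subspace topology inherited from the order topology on the ordinals, and suppose X is homogeneous on its derived set X'. Then there exists a family (I_x)_{x ∈ X'} of pairwise disjoint clopen subsets of X with x ∈ I_x for every x ∈ X', such that: (1) the set D = X \ ⋃_{x ∈ X'} I_x is clopen in X and discrete; (2) for any x, y ∈ X', the subspaces I_x and I_y are homeomorphic; and (3) for each x ∈ X', the point x is the only non-isolated point of the subspace I_x. -/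
/-!
Let `x₀` be the least non-isolated point of `X`. No other point of `X'` lies in `X ∩ [0, x₀]`,
and homogeneity transports this to every `x ∈ X'`: some `X ∩ (a_x, x]` meets `X'` only in `x`;
these intervals are pairwise disjoint. Below `x₀` (and above `a_{x₀}`) all points are isolated, so
a neighbourhood `X ∩ (b, x₀]` is described by its tail filter and the cardinalities of the pieces
`X ∩ (b, d]`, `d < x₀`. A cardinal argument gives `c < x₀` such that every `X ∩ (b, x₀]` contains
a clopen neighbourhood of `x₀` homeomorphic to `C = X ∩ (c, x₀]`: either all pieces are finite and
all these tails are convergent sequences, or some piece `X ∩ (c, d]` injects into `X ∩ (b, d]` and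
can be replaced by its image while `X ∩ (d, x₀]` is kept. Moving such neighbourhoods along
homeomorphisms that exchange `x₀` and `x` gives clopen sets `I_x ⊆ X ∩ (a_x, x]`, all homeomorphic
to `C`.
-/

open Set Topology Filter Cardinal

section Isolated

variable {Y : Type*} [TopologicalSpace Y]

theorem nonIsolated_homeomorph_iff (f : Y ≃ₜ Y) {y : Y} : NonIsolated (f y) ↔ NonIsolated y := by
  simp only [NonIsolated, ← image_singleton, f.isOpen_image]

theorem isOpen_singleton_subtype {A : Set Y} {z : A} (hz : IsOpen {(z : Y)}) : IsOpen {z} := by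
  have := hz.preimage (continuous_subtype_val (p := (· ∈ A)))
  rwa [← image_singleton, Subtype.val_injective.preimage_image] at this

theorem nonIsolated_subtype_iff_s9 {A : Set Y} (hA : IsOpen A) (y : A) :
    NonIsolated y ↔ NonIsolated (y : Y) := by
  simp only [NonIsolated, hA.isOpenEmbedding_subtypeVal.isOpen_iff_image_isOpen, image_singleton]

theorem isOpen_of_forall_isOpen_singleton {S : Set Y} (hS : ∀ z ∈ S, IsOpen {z}) : IsOpen S := by
  rw [← biUnion_of_singleton S]
  exact isOpen_biUnion hS

theorem discreteTopology_of_forall_isOpen_singleton {S : Set Y} (hS : ∀ z ∈ S, IsOpen {z}) :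
    DiscreteTopology S :=
  discreteTopology_iff_isOpen_singleton.2 fun z => isOpen_singleton_subtype (hS z z.2)

theorem isClopen_of_subset_of_forall_isOpen_singleton {K S : Set Y} (hK : IsClosed K)
    (hiso : ∀ z ∈ K, IsOpen {z}) (hSK : S ⊆ K) : IsClopen S := by
  refine ⟨isClosed_of_closure_subset fun w hw => ?_,
    isOpen_of_forall_isOpen_singleton fun z hz => hiso z (hSK hz)⟩
  have hwK : w ∈ K := hK.closure_subset_iff.2 hSK hw
  obtain ⟨z, rfl, hz⟩ := mem_closure_iff.1 hw {w} (hiso w hwK) rfl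
  exact hz

theorem infinite_of_nonIsolated [T1Space Y] {y : Y} (hy : NonIsolated y) : Infinite Y := by
  by_contra hfin
  rw [not_infinite_iff_finite] at hfin
  exact hy (isOpen_discrete _)

theorem HomogeneousOn.exists_isOpen_nonIsolated_eq
    (hhom : HomogeneousOn Y {y | NonIsolated y}) {x₀ x : Y} (hx₀ : NonIsolated x₀)
    (hx : NonIsolated x) {U : Set Y} (hU : IsOpen U) (hx₀U : x₀ ∈ U)
    (hUx₀ : ∀ y ∈ U, NonIsolated y → y = x₀) :
    ∃ V, IsOpen V ∧ x ∈ V ∧ ∀ y ∈ V, NonIsolated y → y = x := by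
  obtain ⟨f, hfx₀, hfx⟩ := hhom x₀ hx₀ x hx
  refine ⟨f ⁻¹' U, hU.preimage f.continuous, by simpa [hfx] using hx₀U, fun y hy hyni => ?_⟩
  have := hUx₀ (f y) hy ((nonIsolated_homeomorph_iff f).2 hyni)
  exact f.injective (this.trans hfx.symm)

end Isolated

section Glue

variable {Y : Type*} {A B V : Set Y}

theorem continuous_of_forall_mem_eq [TopologicalSpace Y] (hV : IsOpen V)
    (hA : ∀ z ∈ A \ V, IsOpen {z}) {f : A → B} (hf : ∀ z : A, (z : Y) ∈ V → (f z : Y) = z) :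
    Continuous f := by
  refine continuous_induced_rng.2 (continuous_iff_continuousAt.2 fun z => ?_)
  by_cases hz : (z : Y) ∈ V
  · refine continuous_subtype_val.continuousAt.congr ?_
    filter_upwards [(hV.preimage continuous_subtype_val).mem_nhds hz] with w hw
    exact (hf w hw).symm
  · rw [ContinuousAt, (isOpen_singleton_iff_nhds_eq_pure z).1
      (isOpen_singleton_subtype (hA z ⟨z.2, hz⟩))]
    exact tendsto_pure_nhds _ z

open Classical in
noncomputable def glueOutside (hAB : A ∩ V = B ∩ V) (φ : ↥(A \ V) ≃ ↥(B \ V)) (z : A) : B :=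
  if h : (z : Y) ∈ V then ⟨z, (hAB ▸ ⟨z.2, h⟩ : (z : Y) ∈ B ∩ V).1⟩
  else ⟨φ ⟨z, z.2, h⟩, (φ ⟨z, z.2, h⟩).2.1⟩

variable (hAB : A ∩ V = B ∩ V) (φ : ↥(A \ V) ≃ ↥(B \ V))

theorem glueOutside_of_mem {z : A} (hz : (z : Y) ∈ V) : (glueOutside hAB φ z : Y) = z := by
  simp [glueOutside, hz]

theorem glueOutside_of_notMem {z : A} (hz : (z : Y) ∉ V) :
    (glueOutside hAB φ z : Y) = φ ⟨z, z.2, hz⟩ := by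
  simp [glueOutside, hz]

theorem glueOutside_symm_glueOutside (z : A) :
    glueOutside hAB.symm φ.symm (glueOutside hAB φ z) = z := by
  apply Subtype.ext
  by_cases hz : (z : Y) ∈ V
  · rw [glueOutside_of_mem _ _ (by rwa [glueOutside_of_mem _ _ hz]), glueOutside_of_mem _ _ hz]
  · have hφ : (glueOutside hAB φ z : Y) ∉ V := by
      rw [glueOutside_of_notMem _ _ hz]; exact (φ _).2.2
    rw [glueOutside_of_notMem _ _ hφ]
    simp [glueOutside_of_notMem _ _ hz]

theorem nonempty_homeomorph_of_inter_eq [TopologicalSpace Y] (hV : IsOpen V)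
    (hAB : A ∩ V = B ∩ V) (hA : ∀ z ∈ A \ V, IsOpen {z}) (hB : ∀ z ∈ B \ V, IsOpen {z})
    (hcard : #(A \ V : Set Y) = #(B \ V : Set Y)) : Nonempty (A ≃ₜ B) := by
  obtain ⟨φ⟩ := Cardinal.eq.1 hcard
  exact ⟨{ toFun := glueOutside hAB φ
           invFun := glueOutside hAB.symm φ.symm
           left_inv := glueOutside_symm_glueOutside hAB φ
           right_inv := glueOutside_symm_glueOutside hAB.symm φ.symm
           continuous_toFun := continuous_of_forall_mem_eq hV hA fun _ => glueOutside_of_mem hAB φ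
           continuous_invFun :=
             continuous_of_forall_mem_eq hV hB fun _ => glueOutside_of_mem hAB.symm φ.symm }⟩

end Glue

section CountableModel

variable {K : Type*} [TopologicalSpace K] [CompactSpace K] [T2Space K]

noncomputable def homeomorphOnePointCompl (p : K) : OnePoint ({p}ᶜ : Set K) ≃ₜ K :=
  OnePoint.equivOfIsEmbeddingOfRangeEq p Subtype.val IsEmbedding.subtypeVal Subtype.range_coe

theorem nonempty_homeomorph_onePoint_nat [Countable K] [Infinite K] {p : K}
    (hp : ∀ z ≠ p, IsOpen {z}) : Nonempty (K ≃ₜ OnePoint ℕ) := by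
  have := discreteTopology_of_forall_isOpen_singleton (S := {p}ᶜ) hp
  have := (finite_singleton p).infinite_compl.to_subtype
  obtain ⟨e⟩ := nonempty_equiv_of_countable (α := ({p}ᶜ : Set K)) (β := ℕ)
  exact ⟨(homeomorphOnePointCompl p).symm.trans (Homeomorph.onePointCongr e.toHomeomorphOfDiscrete)⟩

end CountableModel

section Chunks

variable {α : Type*} [LinearOrder α] {X : Set α}

theorem countable_preimage_Ioo_of_finite {c o : α}
    (hfin : ∀ d < o, ((↑) ⁻¹' Ioc c d : Set X).Finite) : ((↑) ⁻¹' Ioo c o : Set X).Countable := by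
  have hmono : StrictMonoOn (fun z : X => ((↑) ⁻¹' Ioc c z : Set X).ncard)
      ((↑) ⁻¹' Ioo c o) := by
    intro z hz w hw hzw
    refine ncard_lt_ncard ⟨fun y hy => ⟨hy.1, hy.2.trans hzw.le⟩, fun h => ?_⟩ (hfin w hw.2)
    exact (h ⟨hw.1, le_rfl⟩).2.not_gt hzw
  exact (mapsTo_univ _ _).countable_of_injOn hmono.injOn countable_univ

theorem mk_preimage_Ioc_le {c b d : α} (hinf : ℵ₀ ≤ #((↑) ⁻¹' Ioc b d : Set X))
    (hle : #((↑) ⁻¹' Ioc c b : Set X) ≤ #((↑) ⁻¹' Ioc b d : Set X)) :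
    #((↑) ⁻¹' Ioc c d : Set X) ≤ #((↑) ⁻¹' Ioc b d : Set X) :=
  calc #((↑) ⁻¹' Ioc c d : Set X)
      ≤ #((↑) ⁻¹' Ioc c b ∪ (↑) ⁻¹' Ioc b d : Set X) :=
        mk_le_mk_of_subset (preimage_union (s := Ioc c b) ▸ preimage_mono Ioc_subset_Ioc_union_Ioc)
    _ ≤ #((↑) ⁻¹' Ioc c b : Set X) + #((↑) ⁻¹' Ioc b d : Set X) := mk_union_le _ _
    _ ≤ #((↑) ⁻¹' Ioc b d : Set X) := by rw [add_eq_max' hinf, max_le_iff]; exact ⟨hle, le_rfl⟩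

theorem lt_of_aleph0_le_mk_preimage_Ioc {b d : α} (h : ℵ₀ ≤ #((↑) ⁻¹' Ioc b d : Set X)) :
    b < d := by
  by_contra hdb
  rw [Ioc_eq_empty hdb, preimage_empty, mk_eq_zero] at h
  exact aleph0_pos.not_ge h

theorem exists_mk_preimage_Ioc_le_of_infinite {a o : α} (hao : a < o)
    (hinf : ∀ c, a ≤ c → c < o → ∃ d < o, ℵ₀ ≤ #((↑) ⁻¹' Ioc c d : Set X)) :
    ∃ c, a ≤ c ∧ c < o ∧ ∀ b, c ≤ b → b < o → ∃ d < o, ℵ₀ ≤ #((↑) ⁻¹' Ioc b d : Set X) ∧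
      #((↑) ⁻¹' Ioc c b : Set X) ≤ #((↑) ⁻¹' Ioc b d : Set X) := by
  -- `κ` is antitone, hence constant beyond a minimiser `c₁` on `[a, o)`. Either some `c ≥ c₁` has
  -- all its pieces smaller than `κ c₁ = κ b`, so that `(c, b]` is beaten by some piece `(b, d]`,
  -- or every `b ≥ c₁` has a piece of size at least `κ c₁`, which bounds `#(c₁, b]`.
  let κ : α → Cardinal := fun b => ⨆ d : Iio o, #((↑) ⁻¹' Ioc b d : Set X)
  have hle_κ : ∀ b, ∀ d < o, #((↑) ⁻¹' Ioc b d : Set X) ≤ κ b := fun b d hdo =>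
    le_ciSup bddAbove_of_small (⟨d, hdo⟩ : Iio o)
  obtain ⟨c₁, ⟨hac₁, hc₁o⟩, hmin⟩ :=
    (InvImage.wf κ wellFounded_lt).has_min (Ico a o) ⟨a, le_rfl, hao⟩
  have hκ : ∀ b, c₁ ≤ b → b < o → κ b = κ c₁ := fun b hb hbo =>
    le_antisymm (ciSup_mono bddAbove_of_small fun d =>
        mk_le_mk_of_subset (preimage_mono (Ioc_subset_Ioc_left hb)))
      (not_lt.1 (hmin b ⟨hac₁.trans hb, hbo⟩))
  by_cases hsmall : ∃ c, c₁ ≤ c ∧ c < o ∧ ∀ d < o, #((↑) ⁻¹' Ioc c d : Set X) < κ c₁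
  · obtain ⟨c, hc₁c, hco, hc⟩ := hsmall
    refine ⟨c, hac₁.trans hc₁c, hco, fun b hcb hbo => ?_⟩
    obtain ⟨⟨d₁, hd₁o⟩, hd₁⟩ :=
      exists_lt_of_lt_ciSup' ((hc b hbo).trans_eq (hκ b (hc₁c.trans hcb) hbo).symm)
    obtain ⟨d₂, hd₂o, hd₂⟩ := hinf b (hac₁.trans (hc₁c.trans hcb)) hbo
    have hmono : ∀ {d}, d ≤ max d₁ d₂ →
        #((↑) ⁻¹' Ioc b d : Set X) ≤ #((↑) ⁻¹' Ioc b (max d₁ d₂) : Set X) := fun h =>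
      mk_le_mk_of_subset (preimage_mono (Ioc_subset_Ioc_right h))
    exact ⟨max d₁ d₂, max_lt hd₁o hd₂o, hd₂.trans (hmono (le_max_right _ _)),
      hd₁.le.trans (hmono (le_max_left _ _))⟩
  · push Not at hsmall
    have hℵ₀ : ℵ₀ ≤ κ c₁ := by
      obtain ⟨d, hdo, hd⟩ := hinf c₁ hac₁ hc₁o
      exact hd.trans (hle_κ c₁ d hdo)
    refine ⟨c₁, hac₁, hc₁o, fun b hb hbo => ?_⟩
    obtain ⟨d, hdo, hd⟩ := hsmall b hb hbo
    exact ⟨d, hdo, hℵ₀.trans hd, (hle_κ c₁ b hbo).trans hd⟩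

theorem exists_finite_or_mk_preimage_Ioc_le {a o : α} (hao : a < o) :
    ∃ c, a ≤ c ∧ c < o ∧ ((∀ d < o, ((↑) ⁻¹' Ioc c d : Set X).Finite) ∨
      ∀ b, c ≤ b → b < o → ∃ d, b < d ∧ d < o ∧
        #((↑) ⁻¹' Ioc c d : Set X) ≤ #((↑) ⁻¹' Ioc b d : Set X)) := by
  by_cases hfin : ∃ c, a ≤ c ∧ c < o ∧ ∀ d < o, ((↑) ⁻¹' Ioc c d : Set X).Finite
  · obtain ⟨c, hac, hco, h⟩ := hfin
    exact ⟨c, hac, hco, Or.inl h⟩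
  push Not at hfin
  obtain ⟨c, hac, hco, h⟩ := exists_mk_preimage_Ioc_le_of_infinite hao fun c hac hco =>
    (hfin c hac hco).imp fun d ⟨hdo, hd⟩ => ⟨hdo, infinite_iff.1 hd.to_subtype⟩
  refine ⟨c, hac, hco, Or.inr fun b hcb hbo => ?_⟩
  obtain ⟨d, hdo, hd, hcbd⟩ := h b hcb hbo
  exact ⟨d, lt_of_aleph0_le_mk_preimage_Ioc hd, hdo, mk_preimage_Ioc_le hd hcbd⟩

theorem preimage_Ioc_eq_insert {x₀ : X} {b : α} (hbx : b < x₀) :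
    ((↑) ⁻¹' Ioc b x₀ : Set X) = insert x₀ ((↑) ⁻¹' Ioo b x₀) := by
  ext z
  simp only [mem_preimage, mem_Ioc, mem_insert_iff, mem_Ioo, Subtype.ext_iff, le_iff_lt_or_eq]
  constructor
  · rintro ⟨hbz, hzx | hzx⟩
    exacts [Or.inr ⟨hbz, hzx⟩, Or.inl hzx]
  · rintro (hzx | ⟨hbz, hzx⟩)
    exacts [⟨hzx ▸ hbx, Or.inr hzx⟩, ⟨hbz, Or.inl hzx⟩]

end Chunks

section SuccOrder

variable {α : Type*} [LinearOrder α] [TopologicalSpace α] [OrderTopology α] [SuccOrder α]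
  [NoMaxOrder α] {X : Set α}

theorem isClopen_preimage_Ioc (a b : α) : IsClopen ((↑) ⁻¹' Ioc a b : Set X) := by
  refine IsClopen.preimage ⟨?_, ?_⟩ continuous_subtype_val
  · rw [← Order.Icc_succ_left]; exact isClosed_Icc
  · rw [← Order.Ioo_succ_right]; exact isOpen_Ioo

theorem isSuccLimit_of_nonIsolated {x : X} (hx : NonIsolated x) :
    Order.IsSuccLimit (x : α) := by
  by_contra h
  exact hx (isOpen_singleton_subtype (SuccOrder.isOpen_singleton_iff.2 h))

theorem exists_preimage_Ioc_subset {x : X} (hx : NonIsolated x) {U : Set X} (hU : U ∈ 𝓝 x) :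
    ∃ a < (x : α), ((↑) ⁻¹' Ioc a x : Set X) ⊆ U := by
  obtain ⟨V, hV, hVU⟩ := (mem_nhds_induced _ _ _).1 hU
  obtain ⟨l, hl⟩ := not_isMin_iff.1 (isSuccLimit_of_nonIsolated hx).not_isMin
  obtain ⟨a, hax, haV⟩ :=
    (mem_nhdsLE_iff_exists_Ioc_subset' hl).1 (mem_nhdsWithin_of_mem_nhds hV)
  exact ⟨a, hax, (preimage_mono haV).trans hVU⟩

theorem exists_isClopen_homeomorph_of_mk_le {x₀ : X} {a c b d : α}
    (hiso : ∀ z : X, a < z → (z : α) < x₀ → IsOpen {z}) (hac : a ≤ c) (hcb : c ≤ b)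
    (hbd : b < d) (hdx : d < x₀)
    (hcard : #((↑) ⁻¹' Ioc c d : Set X) ≤ #((↑) ⁻¹' Ioc b d : Set X)) :
    ∃ E : Set X, IsClopen E ∧ x₀ ∈ E ∧ E ⊆ (↑) ⁻¹' Ioc b x₀ ∧
      Nonempty (((↑) ⁻¹' Ioc c x₀ : Set X) ≃ₜ E) := by
  obtain ⟨P, hPbd, hP⟩ := le_mk_iff_exists_subset.1 hcard
  have hPd : ∀ z ∈ P, (z : α) ≤ d := fun z hz => (hPbd hz).2
  have hisoD : ∀ z ∈ ((↑) ⁻¹' Ioc a d : Set X), IsOpen {z} := fun z hz =>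
    hiso z hz.1 (hz.2.trans_lt hdx)
  have hisoP : ∀ z ∈ P, IsOpen {z} := fun z hz =>
    hisoD z ⟨(hac.trans hcb).trans_lt (hPbd hz).1, hPd z hz⟩
  refine ⟨P ∪ (↑) ⁻¹' Ioc d x₀, ?_, Or.inr ⟨hdx, le_rfl⟩, ?_, ?_⟩
  · exact (isClopen_of_subset_of_forall_isOpen_singleton (isClopen_preimage_Ioc a d).isClosed
      hisoD fun z hz => ⟨(hac.trans hcb).trans_lt (hPbd hz).1, hPd z hz⟩).union
      (isClopen_preimage_Ioc d x₀)
  · exact union_subset (hPbd.trans (preimage_mono (Ioc_subset_Ioc_right hdx.le)))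
      (preimage_mono (Ioc_subset_Ioc_left hbd.le))
  have hA : ((↑) ⁻¹' Ioc c x₀ : Set X) \ (↑) ⁻¹' Ioi d = (↑) ⁻¹' Ioc c d := by
    rw [← preimage_sdiff, Ioc_sdiff_Ioi, min_eq_right hdx.le]
  have hB : (P ∪ (↑) ⁻¹' Ioc d x₀) \ (↑) ⁻¹' Ioi d = P := by
    ext z
    simp only [Set.mem_sdiff, mem_union, mem_preimage, mem_Ioc, mem_Ioi, not_lt]
    exact ⟨fun ⟨h, hzd⟩ => h.resolve_right fun h' => h'.1.not_ge hzd,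
      fun hz => ⟨Or.inl hz, hPd z hz⟩⟩
  refine nonempty_homeomorph_of_inter_eq (isOpen_Ioi.preimage continuous_subtype_val) ?_
    (by rw [hA]; exact fun z hz => hisoD z ⟨hac.trans_lt hz.1, hz.2⟩)
    (by rw [hB]; exact hisoP) (by rw [hA, hB, hP])
  ext z
  simp only [mem_inter_iff, mem_union, mem_preimage, mem_Ioc, mem_Ioi]
  exact ⟨fun ⟨⟨_, hzx⟩, hdz⟩ => ⟨Or.inr ⟨hdz, hzx⟩, hdz⟩,
    fun ⟨h, hdz⟩ => ⟨⟨(hcb.trans hbd.le).trans_lt hdz,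
      h.elim (fun hz => absurd (hPd z hz) hdz.not_ge) And.right⟩, hdz⟩⟩

theorem isCompact_preimage_Ioc_of_finite {x₀ : X} (hx₀ : NonIsolated x₀) {b : α} (hbx : b < x₀)
    (hfin : ∀ d < (x₀ : α), ((↑) ⁻¹' Ioc b d : Set X).Finite) :
    IsCompact ((↑) ⁻¹' Ioc b x₀ : Set X) := by
  rw [preimage_Ioc_eq_insert hbx, ← Subtype.range_coe (s := ((↑) ⁻¹' Ioo b (x₀ : α) : Set X))]
  refine Tendsto.isCompact_insert_range_of_cofinite fun U hU => ?_
  obtain ⟨a, hax, haU⟩ := exists_preimage_Ioc_subset hx₀ hU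
  refine ((hfin a hax).preimage Subtype.val_injective.injOn).subset fun z hz => ?_
  exact ⟨z.2.1, not_lt.1 fun h => hz (haU ⟨h, z.2.2.le⟩)⟩

theorem nonempty_preimage_Ioc_homeomorph_onePoint_nat {x₀ : X} (hx₀ : NonIsolated x₀) {a b : α}
    (hiso : ∀ z : X, a < z → (z : α) < x₀ → IsOpen {z}) (hab : a ≤ b) (hbx : b < x₀)
    (hfin : ∀ d < (x₀ : α), ((↑) ⁻¹' Ioc b d : Set X).Finite) :
    Nonempty (((↑) ⁻¹' Ioc b x₀ : Set X) ≃ₜ OnePoint ℕ) := by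
  let p : ((↑) ⁻¹' Ioc b x₀ : Set X) := ⟨x₀, hbx, le_rfl⟩
  have := isCompact_iff_compactSpace.1 (isCompact_preimage_Ioc_of_finite hx₀ hbx hfin)
  have : Countable ((↑) ⁻¹' Ioc b x₀ : Set X) := by
    rw [preimage_Ioc_eq_insert hbx]
    exact ((countable_preimage_Ioo_of_finite hfin).insert x₀).to_subtype
  have := infinite_of_nonIsolated
    ((nonIsolated_subtype_iff_s9 (isClopen_preimage_Ioc b x₀).isOpen p).2 hx₀)
  refine nonempty_homeomorph_onePoint_nat (p := p) fun z hz => isOpen_singleton_subtype ?_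
  exact hiso z (hab.trans_lt z.2.1) (z.2.2.lt_of_ne fun h => hz (Subtype.ext (Subtype.ext h)))

theorem exists_forall_exists_isClopen_homeomorph {x₀ : X} (hx₀ : NonIsolated x₀) {a : α}
    (hax : a < x₀) (hiso : ∀ z : X, a < z → (z : α) < x₀ → IsOpen {z}) :
    ∃ C : Set X, ∀ b < (x₀ : α), ∃ E : Set X, IsClopen E ∧ x₀ ∈ E ∧ E ⊆ (↑) ⁻¹' Ioc b x₀ ∧
      Nonempty (C ≃ₜ E) := by
  obtain ⟨c, hac, hcx, hfin | hcard⟩ := exists_finite_or_mk_preimage_Ioc_le (X := X) hax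
  · refine ⟨(↑) ⁻¹' Ioc c x₀, fun b hbx => ⟨(↑) ⁻¹' Ioc (max b c) x₀,
      isClopen_preimage_Ioc _ _, ⟨max_lt hbx hcx, le_rfl⟩,
      preimage_mono (Ioc_subset_Ioc_left (le_max_left _ _)), ?_⟩⟩
    have hfin' : ∀ d < (x₀ : α), ((↑) ⁻¹' Ioc (max b c) d : Set X).Finite := fun d hdx =>
      (hfin d hdx).subset (preimage_mono (Ioc_subset_Ioc_left (le_max_right _ _)))
    obtain ⟨e₁⟩ := nonempty_preimage_Ioc_homeomorph_onePoint_nat hx₀ hiso hac hcx hfin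
    obtain ⟨e₂⟩ := nonempty_preimage_Ioc_homeomorph_onePoint_nat hx₀ hiso
      (hac.trans (le_max_right _ _)) (max_lt hbx hcx) hfin'
    exact ⟨e₁.trans e₂.symm⟩
  · refine ⟨(↑) ⁻¹' Ioc c x₀, fun b hbx => ?_⟩
    obtain ⟨d, hbd, hdx, hd⟩ := hcard (max b c) (le_max_right _ _) (max_lt hbx hcx)
    obtain ⟨E, hE, hx₀E, hEb, he⟩ := exists_isClopen_homeomorph_of_mk_le hiso hac
      (le_max_right _ _) hbd hdx hd
    exact ⟨E, hE, hx₀E, hEb.trans (preimage_mono (Ioc_subset_Ioc_left (le_max_left _ _))), he⟩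

theorem exists_preimage_Ioc_nonIsolated_eq [WellFoundedLT α]
    (hhom : HomogeneousOn X {y | NonIsolated y}) {x : X} (hx : NonIsolated x) :
    ∃ a < (x : α), ∀ y ∈ ((↑) ⁻¹' Ioc a x : Set X), NonIsolated y → y = x := by
  obtain ⟨x₀, hx₀, hmin⟩ := wellFounded_lt.has_min {y : X | NonIsolated y} ⟨x, hx⟩
  have hx₀U : ∀ y ∈ ((↑) ⁻¹' Iio (Order.succ (x₀ : α)) : Set X), NonIsolated y → y = x₀ :=
    fun y hy hyn => le_antisymm (Subtype.coe_le_coe.1 (Order.lt_succ_iff.1 hy))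
      (not_lt.1 (hmin y hyn))
  obtain ⟨V, hV, hxV, hVx⟩ := hhom.exists_isOpen_nonIsolated_eq hx₀ hx
    (isOpen_Iio.preimage continuous_subtype_val) (Order.lt_succ (x₀ : α)) hx₀U
  obtain ⟨a, hax, haV⟩ := exists_preimage_Ioc_subset hx (hV.mem_nhds hxV)
  exact ⟨a, hax, fun y hy => hVx y (haV hy)⟩

theorem exists_clopen_family [WellFoundedLT α] (hhom : HomogeneousOn X {y | NonIsolated y}) :
    ∃ I : {x : X | NonIsolated x} → Set X, (∀ x, IsClopen (I x)) ∧
      (Pairwise fun x y => Disjoint (I x) (I y)) ∧ (∀ x, (x : X) ∈ I x) ∧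
      (∀ x, ∀ y ∈ I x, NonIsolated y → y = x) ∧ ∀ x y, Nonempty (I x ≃ₜ I y) := by
  rcases isEmpty_or_nonempty {x : X | NonIsolated x} with hX' | ⟨x₀, hx₀⟩
  · exact ⟨fun _ => ∅, isEmptyElim, fun x => isEmptyElim x, isEmptyElim, isEmptyElim,
      isEmptyElim⟩
  choose a hax haJ using fun x : {x : X | NonIsolated x} =>
    exists_preimage_Ioc_nonIsolated_eq hhom x.2
  have hiso : ∀ z : X, a ⟨x₀, hx₀⟩ < z → (z : α) < x₀ → IsOpen {z} := fun z haz hzx =>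
    not_not.1 fun hz => hzx.ne (congrArg Subtype.val (haJ ⟨x₀, hx₀⟩ z ⟨haz, hzx.le⟩ hz))
  obtain ⟨C, hC⟩ := exists_forall_exists_isClopen_homeomorph hx₀ (hax ⟨x₀, hx₀⟩) hiso
  have hI : ∀ x : {x : X | NonIsolated x}, ∃ I : Set X, IsClopen I ∧ (x : X) ∈ I ∧
      I ⊆ (↑) ⁻¹' Ioc (a x) x ∧ Nonempty (C ≃ₜ I) := by
    intro x
    obtain ⟨g, hgx₀, -⟩ := hhom x₀ hx₀ x x.2
    obtain ⟨b, hbx, hbJ⟩ := exists_preimage_Ioc_subset hx₀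
      (((isClopen_preimage_Ioc (a x) x).isOpen.preimage g.continuous).mem_nhds
        (by rw [mem_preimage, hgx₀]; exact ⟨hax x, le_rfl⟩))
    obtain ⟨E, hE, hx₀E, hEb, ⟨e⟩⟩ := hC b hbx
    exact ⟨g '' E, g.image_eq_preimage_symm E ▸ hE.preimage g.symm.continuous,
      ⟨x₀, hx₀E, hgx₀⟩, image_subset_iff.2 (hEb.trans hbJ), ⟨e.trans (g.image E)⟩⟩
  choose I hIclopen hxI hIJ hCI using hI
  have hJ : ∀ x y : {x : X | NonIsolated x}, (x : α) < y →
      Disjoint ((↑) ⁻¹' Ioc (a x) x : Set X) ((↑) ⁻¹' Ioc (a y) y) := fun x y hxy =>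
    (Ioc_disjoint_Ioc_of_le (not_lt.1 fun h =>
      hxy.ne (congrArg Subtype.val (haJ y x ⟨h, hxy.le⟩ x.2)))).preimage _
  refine ⟨I, hIclopen, fun x y hxy => ?_, hxI, fun x y hy => haJ x y (hIJ x hy),
    fun x y => ⟨(hCI x).some.symm.trans (hCI y).some⟩⟩
  rcases lt_or_gt_of_ne (Subtype.coe_injective.ne (Subtype.coe_injective.ne hxy)) with h | h
  · exact (hJ x y h).mono (hIJ x) (hIJ y)
  · exact ((hJ y x h).mono (hIJ y) (hIJ x)).symm

end SuccOrder

/-- If a set of ordinals `X` (subspace topology) is homogeneous on its derived set `X'`,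
then there is a family `(I_x)_{x ∈ X'}` of pairwise disjoint clopen sets with `x ∈ I_x`,
whose complement `D` is clopen and discrete, with all `I_x` mutually homeomorphic, and
with `x` the only non-isolated point of `I_x`. -/
theorem stmt_9 (X : Set Ordinal)
    (hhom : HomogeneousOn ↥X {x : ↥X | NonIsolated x}) :
    ∃ I : {x : ↥X | NonIsolated x} → Set ↥X,
      (∀ x, IsClopen (I x)) ∧
      (Pairwise fun x y => Disjoint (I x) (I y)) ∧
      (∀ x, (x : ↥X) ∈ I x) ∧
      IsClopen ((⋃ x, I x)ᶜ) ∧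
      DiscreteTopology ↥((⋃ x, I x)ᶜ) ∧
      (∀ x y, Nonempty (↥(I x) ≃ₜ ↥(I y))) ∧
      (∀ x, ∀ y : ↥(I x), NonIsolated y ↔ (y : ↥X) = (x : ↥X)) := by
  obtain ⟨I, hI, hdisj, hxI, hIx, hhomeo⟩ := exists_clopen_family hhom
  have hD : ∀ z ∈ (⋃ x, I x)ᶜ, IsOpen {z} := fun z hz =>
    not_not.1 fun hz' => hz (mem_iUnion.2 ⟨⟨z, hz'⟩, hxI _⟩)
  refine ⟨I, hI, hdisj, hxI, ⟨(isOpen_iUnion fun x => (hI x).isOpen).isClosed_compl,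
    isOpen_of_forall_isOpen_singleton hD⟩, discreteTopology_of_forall_isOpen_singleton hD, hhomeo,
    fun x y => ?_⟩
  rw [nonIsolated_subtype_iff_s9 (hI x).isOpen]
  exact ⟨hIx x y y.2, fun h => h ▸ x.2⟩
end

section
/- For every infinite cardinal γ there exists a linear order ≺ on L_γ such that: (1) the order topology induced by ≺ on L_γ equals the topology of L_γ (the subspace topology from the ordinals); and (2) ≺ agrees with the usual ordinal order on all pairs containing a non-isolated point of L_γ, i.e., for every x in the derived set of L_γ and every y ∈ L_γ, if x < y then x ≺ y, and if y < x then y ≺ x. -/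
/-- For an infinite cardinal `γ`, the set of ordinals
`L_γ = {α ≤ γ·γ : α = γ·γ, or α = 0, or α is a successor, or α = β + γ for some β}`. -/
def Lset (γ : Cardinal) : Set Ordinal :=
  {α | α ≤ γ.ord * γ.ord ∧
    (α = γ.ord * γ.ord ∨ α = 0 ∨ (∃ β, α = β + 1) ∨ ∃ β : Ordinal, α = β + γ.ord)}

open Order Set Filter Topology

theorem Prod.Lex.eq_of_toLex_sub_one_lt_of_lt_toLex_add_one {α : Type*} [Preorder α] {a : α}
    {t : ℤ} {k : α ×ₗ ℤ} (h₁ : toLex (a, t - 1) < k) (h₂ : k < toLex (a, t + 1)) :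
    k = toLex (a, t) := by
  obtain ⟨⟨b, s⟩, rfl⟩ : ∃ p : α × ℤ, toLex p = k := ⟨ofLex k, rfl⟩
  rw [Prod.Lex.toLex_lt_toLex] at h₁ h₂
  dsimp only at h₁ h₂
  obtain h₁ | ⟨rfl, h₁⟩ := h₁ <;> obtain h₂ | ⟨h₂', h₂⟩ := h₂
  · exact absurd (h₁.trans h₂) (lt_irrefl a)
  · exact absurd h₁ h₂'.symm.not_lt
  · exact absurd h₂ (lt_irrefl _)
  · rw [show s = t by omega]

namespace Ordinal

noncomputable def blockStart (y : Ordinal) : Ordinal := ω * (y / ω)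

noncomputable def blockIdx (y : Ordinal) : ℕ := Cardinal.toNat (y % ω).card

theorem natCast_blockIdx (y : Ordinal) : (blockIdx y : Ordinal) = y % ω := by
  obtain ⟨n, hn⟩ := lt_omega0.1 (mod_lt y omega0_ne_zero)
  simp [blockIdx, hn]

theorem blockStart_add_blockIdx (y : Ordinal) : blockStart y + blockIdx y = y := by
  rw [natCast_blockIdx, blockStart, div_add_mod]

theorem omega0_dvd_blockStart (y : Ordinal) : ω ∣ blockStart y := dvd_mul_right _ _

theorem blockStart_le (y : Ordinal) : blockStart y ≤ y := mul_div_le y ω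

theorem lt_blockStart_add_omega0 (y : Ordinal) : y < blockStart y + ω :=
  lt_mul_div_add y omega0_ne_zero

theorem le_blockStart {d y : Ordinal} (hd : ω ∣ d) (h : d ≤ y) : d ≤ blockStart y := by
  obtain ⟨q, rfl⟩ := hd
  exact mul_le_mul_right ((mul_le_iff_le_div omega0_ne_zero).1 h) ω

theorem blockStart_mono : Monotone blockStart :=
  fun _ _ h => le_blockStart (omega0_dvd_blockStart _) ((blockStart_le _).trans h)

theorem blockStart_add_natCast {μ : Ordinal} (hμ : ω ∣ μ) (n : ℕ) : blockStart (μ + n) = μ := by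
  obtain ⟨q, rfl⟩ := hμ
  rw [blockStart, mul_add_div _ omega0_ne_zero, div_eq_zero_of_lt (natCast_lt_omega0 n), add_zero]

theorem blockIdx_add_natCast {μ : Ordinal} (hμ : ω ∣ μ) (n : ℕ) : blockIdx (μ + n) = n := by
  have h := blockStart_add_blockIdx (μ + n)
  rw [blockStart_add_natCast hμ] at h
  exact_mod_cast (add_left_cancel h)

theorem blockStart_eq_self {y : Ordinal} (h : ω ∣ y) : blockStart y = y := by
  simpa using blockStart_add_natCast h 0

theorem blockIdx_eq_zero_iff {y : Ordinal} : blockIdx y = 0 ↔ ω ∣ y := by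
  refine ⟨fun h => ?_, fun h => by simpa using blockIdx_add_natCast h 0⟩
  have hy := blockStart_add_blockIdx y
  rw [h, Nat.cast_zero, add_zero] at hy
  exact hy ▸ omega0_dvd_blockStart y

theorem isSuccLimit_iff_blockIdx_eq_zero {y : Ordinal} :
    IsSuccLimit y ↔ y ≠ 0 ∧ blockIdx y = 0 := by
  rw [isSuccLimit_iff, isSuccPrelimit_iff_omega0_dvd, blockIdx_eq_zero_iff]

theorem blockStart_lt_of_blockIdx_ne_zero {y : Ordinal} (h : blockIdx y ≠ 0) :
    blockStart y < y := by
  conv_rhs => rw [← blockStart_add_blockIdx y]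
  exact lt_add_of_pos_right _ (by exact_mod_cast Nat.pos_of_ne_zero h)

theorem blockStart_add_one (y : Ordinal) : blockStart (y + 1) = blockStart y := by
  have h := blockStart_add_natCast (omega0_dvd_blockStart y) (blockIdx y + 1)
  rwa [Nat.cast_succ, ← add_assoc, blockStart_add_blockIdx] at h

theorem add_omega0_le_of_lt {μ x : Ordinal} (hμ : ω ∣ μ) (hx : ω ∣ x) (h : μ < x) :
    μ + ω ≤ x := by
  obtain ⟨m, rfl⟩ := hμ
  obtain ⟨k, rfl⟩ := hx
  rw [← mul_succ]
  exact mul_le_mul_right (succ_le_of_lt (lt_of_mul_lt_mul_left' h)) ω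

theorem eq_zero_or_eq_add_omega0 {μ : Ordinal} (hμ : ω ∣ μ) (h : μ < ω * ω) :
    μ = 0 ∨ ∃ β, μ = β + ω := by
  obtain ⟨m, rfl⟩ := hμ
  obtain ⟨n, rfl⟩ := lt_omega0.1 (lt_of_mul_lt_mul_left' h)
  cases n with
  | zero => simp
  | succ k => exact Or.inr ⟨ω * k, by push_cast; rw [mul_add_one]⟩

theorem not_dvd_add_omega0 {o : Ordinal} (ho : IsPrincipal (· + ·) o) (hω : ω < o)
    (μ : Ordinal) : ¬ o ∣ μ + ω := by
  have hmod : (μ + ω) % o = μ % o + ω := by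
    conv_lhs => rw [← div_add_mod μ o, add_assoc]
    rw [mul_add_mod_self, mod_eq_of_lt (ho (mod_lt μ hω.ne_bot) hω)]
  rw [dvd_iff_mod_eq_zero, hmod]
  exact fun h => omega0_ne_zero (add_eq_zero_iff.1 h).2

section Key

variable (S : Set Ordinal)

open Classical in
/-- Outside `S` the truncated `blockIdx y - 1` gives the block start and its successor the same
tag; this is harmless since `blockKey S` only needs to be injective on `S`. -/
noncomputable def blockTag (y : Ordinal) : ℤ :=
  if blockStart y ∈ S then blockIdx y else Equiv.intEquivNat.symm (blockIdx y - 1)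

noncomputable def blockKey (y : Ordinal) : Ordinal ×ₗ ℤ := toLex (blockStart y, blockTag S y)

variable {S}

theorem blockTag_of_mem {y : Ordinal} (h : blockStart y ∈ S) : blockTag S y = blockIdx y := if_pos h

theorem blockKey_lt_blockKey_of_blockStart_lt {y z : Ordinal} (h : blockStart y < blockStart z) :
    blockKey S y < blockKey S z :=
  Prod.Lex.toLex_lt_toLex.2 (Or.inl h)

theorem blockStart_le_of_blockKey_lt {y z : Ordinal} (h : blockKey S y < blockKey S z) :
    blockStart y ≤ blockStart z := by
  rcases Prod.Lex.toLex_lt_toLex.1 h with h | ⟨h, -⟩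
  exacts [h.le, h.le]

theorem blockKey_lt_blockKey_of_lt {y z : Ordinal} (h : y < z)
    (hS : blockStart y ∈ S ∨ blockStart z ∈ S) :
    blockKey S y < blockKey S z := by
  rcases (blockStart_mono h.le).lt_or_eq with hlt | heq
  · exact blockKey_lt_blockKey_of_blockStart_lt hlt
  · have hy : blockStart y ∈ S := hS.elim id (heq ▸ ·)
    refine Prod.Lex.toLex_lt_toLex.2 (Or.inr ⟨heq, ?_⟩)
    rw [← blockStart_add_blockIdx y, ← blockStart_add_blockIdx z, heq] at h
    dsimp only
    rw [blockTag_of_mem hy, blockTag_of_mem (heq ▸ hy)]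
    exact_mod_cast (add_lt_add_iff_left _).1 h

theorem blockKey_lt_blockKey_iff {y z : Ordinal} (hS : blockStart y ∈ S ∨ blockStart z ∈ S) :
    blockKey S y < blockKey S z ↔ y < z := by
  refine ⟨fun h => ?_, fun h => blockKey_lt_blockKey_of_lt h hS⟩
  by_contra hyz
  rcases (not_lt.1 hyz).eq_or_lt with rfl | hzy
  · exact lt_irrefl _ h
  · exact (blockKey_lt_blockKey_of_lt hzy hS.symm).asymm h

theorem blockStart_mem_or_blockIdx_ne_zero {y : Ordinal} (hy : y ∈ S) :
    blockStart y ∈ S ∨ blockIdx y ≠ 0 := by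
  by_cases h0 : blockIdx y = 0
  · left
    rw [blockStart_eq_self (blockIdx_eq_zero_iff.1 h0)]
    exact hy
  · exact Or.inr h0

theorem blockKey_injOn : InjOn (blockKey S) S := by
  intro y hy z hz h
  obtain ⟨hstart, htag⟩ := Prod.ext_iff.1 (toLex.injective h)
  dsimp only at hstart htag
  suffices blockIdx y = blockIdx z by
    rw [← blockStart_add_blockIdx y, ← blockStart_add_blockIdx z, hstart, this]
  by_cases hS : blockStart y ∈ S
  · rwa [blockTag_of_mem hS, blockTag_of_mem (hstart ▸ hS), Nat.cast_inj] at htag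
  · have hy0 := (blockStart_mem_or_blockIdx_ne_zero hy).resolve_left hS
    have hz0 := (blockStart_mem_or_blockIdx_ne_zero hz).resolve_left (hstart ▸ hS)
    rw [blockTag, blockTag, if_neg hS, if_neg (hstart ▸ hS)] at htag
    have := Equiv.injective _ htag
    omega

theorem exists_blockKey_eq {μ : Ordinal} (hμ : ω ∣ μ) {t : ℤ} (ht : μ ∈ S → 0 ≤ t) :
    ∃ n : ℕ, (μ ∈ S ∨ n ≠ 0) ∧ blockKey S (μ + n) = toLex (μ, t) := by
  by_cases hS : μ ∈ S
  · refine ⟨t.toNat, Or.inl hS, ?_⟩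
    rw [blockKey, blockTag, blockStart_add_natCast hμ, if_pos hS, blockIdx_add_natCast hμ,
      Int.toNat_of_nonneg (ht hS)]
  · refine ⟨Equiv.intEquivNat t + 1, Or.inr (Nat.succ_ne_zero _), ?_⟩
    rw [blockKey, blockTag, blockStart_add_natCast hμ, if_neg hS, blockIdx_add_natCast hμ,
      Nat.add_sub_cancel, Equiv.symm_apply_apply]

end Key

end Ordinal

namespace Lset

open Cardinal Ordinal

variable {γ : Cardinal}

theorem zero_mem : (0 : Ordinal) ∈ Lset γ := ⟨zero_le, Or.inr (Or.inl rfl)⟩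

theorem add_one_mem {s : Ordinal} (h : s + 1 ≤ γ.ord * γ.ord) : s + 1 ∈ Lset γ :=
  ⟨h, Or.inr (Or.inr (Or.inl ⟨s, rfl⟩))⟩

theorem omega0_dvd_ord_mul_ord (hγ : ℵ₀ ≤ γ) : ω ∣ γ.ord * γ.ord :=
  (isSuccPrelimit_iff_omega0_dvd.1 (isSuccLimit_ord hγ).isSuccPrelimit).mul_right _

theorem add_natCast_mem (hγ : ℵ₀ ≤ γ) {μ : Ordinal} (hμ : ω ∣ μ) (hlt : μ < γ.ord * γ.ord)
    {n : ℕ} (h : μ ∈ Lset γ ∨ n ≠ 0) : μ + n ∈ Lset γ := by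
  cases n with
  | zero => simpa using h
  | succ m =>
    rw [Nat.cast_succ, ← add_assoc]
    refine add_one_mem (le_of_lt ?_)
    calc μ + m + 1 = μ + (m + 1 : ℕ) := by push_cast; rw [add_assoc]
      _ < μ + ω := add_lt_add_right (natCast_lt_omega0 _) μ
      _ ≤ γ.ord * γ.ord := add_omega0_le_of_lt hμ (omega0_dvd_ord_mul_ord hγ) hlt

theorem ord_dvd_of_isSuccLimit (hγ : ℵ₀ ≤ γ) {x : Ordinal} (hx : x ∈ Lset γ)
    (hlim : IsSuccLimit x) : γ.ord ∣ x := by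
  obtain ⟨-, htop | h0 | ⟨β, hβ⟩ | ⟨β, hβ⟩⟩ := hx
  · exact htop ▸ dvd_mul_right _ _
  · exact absurd h0 hlim.ne_zero
  · exact absurd (hβ ▸ hlim) (by rw [← succ_eq_add_one]; exact not_isSuccLimit_succ β)
  · have hord : γ.ord ≠ 0 := (omega0_pos.trans_le (omega0_le_ord.2 hγ)).ne'
    rw [hβ, ← div_add_mod β γ.ord, add_assoc,
      (isPrincipal_add_ord hγ).add_eq_right (mod_lt β hord), ← mul_add_one]
    exact dvd_mul_right _ _

theorem mem_of_add_omega0_mem (hγ : ℵ₀ ≤ γ) {μ : Ordinal} (hμ : ω ∣ μ)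
    (h : μ + ω ∈ Lset γ) : μ ∈ Lset γ := by
  rcases (omega0_le_ord.2 hγ).eq_or_lt with hω | hω
  · have hlt : μ < γ.ord * γ.ord := (lt_add_of_pos_right μ omega0_pos).trans_le h.1
    refine ⟨hlt.le, Or.inr ?_⟩
    rw [← hω] at hlt ⊢
    rcases eq_zero_or_eq_add_omega0 hμ hlt with h0 | hβ
    exacts [Or.inl h0, Or.inr (Or.inr hβ)]
  · exact absurd (ord_dvd_of_isSuccLimit hγ h (isSuccLimit_add μ isSuccLimit_omega0))
      (not_dvd_add_omega0 (isPrincipal_add_ord hγ) hω μ)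

theorem add_omega0_lt (hγ : ℵ₀ ≤ γ) {x μ : Ordinal} (hx : x ∈ Lset γ) (hxω : ω ∣ x)
    (hμ : ω ∣ μ) (hμL : μ ∉ Lset γ) (h : μ < x) : μ + ω < x :=
  (add_omega0_le_of_lt hμ hxω h).lt_of_ne fun e => hμL (mem_of_add_omega0_mem hγ hμ (e ▸ hx))

theorem blockStart_mem_of_isSuccLimit {x : Lset γ} (hx : IsSuccLimit x.1) :
    blockStart x.1 ∈ Lset γ := by
  rw [blockStart_eq_self (isSuccPrelimit_iff_omega0_dvd.1 hx.isSuccPrelimit)]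
  exact x.2

theorem isOpen_singleton_of_not_isSuccLimit {x : Lset γ} (hx : ¬ IsSuccLimit x.1) :
    IsOpen {x} := by
  have h : ({x} : Set (Lset γ)) = Subtype.val ⁻¹' {x.1} := by ext; simp [Subtype.ext_iff]
  rw [h]
  exact (SuccOrder.isOpen_singleton_iff.2 hx).preimage continuous_subtype_val

end Lset

def Lset.Reordered (γ : Cardinal) : Type _ := Lset γ

namespace Lset.Reordered

open Cardinal Ordinal

variable {γ : Cardinal}

def ofLset : Lset γ ≃ Reordered γ := Equiv.refl _

noncomputable instance : LinearOrder (Reordered γ) :=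
  LinearOrder.lift' (fun x => blockKey (Lset γ) (ofLset.symm x).1)
    fun x y h => ofLset.symm.injective <|
      Subtype.ext (blockKey_injOn (ofLset.symm x).2 (ofLset.symm y).2 h)

noncomputable instance : TopologicalSpace (Reordered γ) := Preorder.topology _

instance : OrderTopology (Reordered γ) := ⟨rfl⟩

theorem ofLset_lt_ofLset {x y : Lset γ} :
    ofLset x < ofLset y ↔ blockKey (Lset γ) x.1 < blockKey (Lset γ) y.1 := Iff.rfl

theorem exists_mem_blockKey_eq (hγ : ℵ₀ ≤ γ) {μ : Ordinal} (hμ : ω ∣ μ)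
    (hlt : μ < γ.ord * γ.ord) {t : ℤ} (ht : μ ∈ Lset γ → 0 ≤ t) :
    ∃ q : Lset γ, blockKey (Lset γ) q.1 = toLex (μ, t) := by
  obtain ⟨n, hn, hkey⟩ := Ordinal.exists_blockKey_eq hμ ht
  exact ⟨⟨μ + n, Lset.add_natCast_mem hγ hμ hlt hn⟩, hkey⟩

theorem isOpen_singleton_zero (hγ : ℵ₀ ≤ γ) {x : Lset γ} (h0 : x.1 = 0) :
    IsOpen {ofLset x} := by
  have hord : γ.ord ≠ 0 := (omega0_pos.trans_le (omega0_le_ord.2 hγ)).ne'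
  have h1 : (1 : Ordinal) ∈ Lset γ := by
    simpa using Lset.add_one_mem (γ := γ) (s := 0)
      (by simpa [Order.one_le_iff_ne_zero] using mul_ne_zero hord hord)
  have hS : blockStart (1 : Ordinal) ∈ Lset γ := by
    rw [← zero_add 1, blockStart_add_one, blockStart_eq_self (dvd_zero ω)]
    exact Lset.zero_mem
  convert isOpen_Iio (a := ofLset ⟨1, h1⟩)
  ext y
  obtain ⟨y, rfl⟩ := ofLset.surjective y
  rw [mem_singleton_iff, mem_Iio, ofLset.injective.eq_iff, ofLset_lt_ofLset,
    blockKey_lt_blockKey_iff (Or.inr hS), Subtype.ext_iff, h0, Order.lt_one_iff]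

theorem isOpen_singleton_of_blockIdx_ne_zero (hγ : ℵ₀ ≤ γ) {x : Lset γ} (hx : blockIdx x.1 ≠ 0) :
    IsOpen {ofLset x} := by
  have hlt : blockStart x.1 < γ.ord * γ.ord := (blockStart_lt_of_blockIdx_ne_zero hx).trans_le x.2.1
  obtain ⟨p, hp⟩ := exists_mem_blockKey_eq hγ (omega0_dvd_blockStart _) hlt
    (t := blockTag (Lset γ) x.1 - 1) fun hS => by rw [blockTag_of_mem hS]; omega
  obtain ⟨q, hq⟩ := exists_mem_blockKey_eq hγ (omega0_dvd_blockStart _) hlt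
    (t := blockTag (Lset γ) x.1 + 1) fun hS => by rw [blockTag_of_mem hS]; omega
  convert isOpen_Ioo (a := ofLset p) (b := ofLset q)
  ext y
  obtain ⟨y, rfl⟩ := ofLset.surjective y
  rw [mem_singleton_iff, mem_Ioo, ofLset.injective.eq_iff, ofLset_lt_ofLset, ofLset_lt_ofLset,
    hp, hq]
  constructor
  · rintro rfl
    constructor <;> exact Prod.Lex.toLex_lt_toLex.2 (Or.inr ⟨rfl, by omega⟩)
  · rintro ⟨h₁, h₂⟩
    exact Subtype.ext (blockKey_injOn y.2 x.2
      (Prod.Lex.eq_of_toLex_sub_one_lt_of_lt_toLex_add_one h₁ h₂))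

theorem isOpen_singleton_ofLset_of_not_isSuccLimit (hγ : ℵ₀ ≤ γ) {x : Lset γ} (hx : ¬ IsSuccLimit x.1) :
    IsOpen {ofLset x} := by
  rw [isSuccLimit_iff_blockIdx_eq_zero, not_and_or, not_not] at hx
  exact hx.elim (isOpen_singleton_zero hγ) (isOpen_singleton_of_blockIdx_ne_zero hγ)

theorem eventually_lt_ofLset (hγ : ℵ₀ ≤ γ) {x : Lset γ} (hx : IsSuccLimit x.1) {a : Lset γ}
    (ha : ofLset a < ofLset x) : ∀ᶠ y in 𝓝 x, ofLset a < ofLset y := by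
  have hval : Tendsto Subtype.val (𝓝 x) (𝓝 x.1) := continuous_subtype_val.tendsto x
  by_cases haS : blockStart a.1 ∈ Lset γ
  · have hax : a.1 < x.1 := (blockKey_lt_blockKey_iff (Or.inl haS)).1 ha
    filter_upwards [hval.eventually (lt_mem_nhds hax)] with y hy
    exact (blockKey_lt_blockKey_iff (Or.inl haS)).2 hy
  · have hxω : ω ∣ x.1 := isSuccPrelimit_iff_omega0_dvd.1 hx.isSuccPrelimit
    have hax : blockStart a.1 < x.1 := by
      refine ((blockStart_le_of_blockKey_lt ha).trans_eq (blockStart_eq_self hxω)).lt_of_ne ?_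
      rintro h
      exact haS (h ▸ x.2)
    have hw := Lset.add_omega0_lt hγ x.2 hxω (omega0_dvd_blockStart _) haS hax
    filter_upwards [hval.eventually (lt_mem_nhds hw)] with y hy
    refine blockKey_lt_blockKey_of_blockStart_lt ((lt_add_of_pos_right _ omega0_pos).trans_le ?_)
    exact le_blockStart ((omega0_dvd_blockStart _).add dvd_rfl) hy.le

theorem eventually_ofLset_lt {x : Lset γ} (hx : IsSuccLimit x.1) {b : Lset γ}
    (hb : ofLset x < ofLset b) : ∀ᶠ y in 𝓝 x, ofLset y < ofLset b := by
  have hxS := Lset.blockStart_mem_of_isSuccLimit hx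
  filter_upwards [(continuous_subtype_val.tendsto x).eventually (gt_mem_nhds (lt_add_one x.1))]
    with y hy
  rcases (Order.lt_add_one_iff.1 hy).lt_or_eq with h | h
  · exact ((blockKey_lt_blockKey_iff (Or.inr hxS)).2 h).trans hb
  · rwa [Subtype.ext h]

theorem eventually_lt_val (hγ : ℵ₀ ≤ γ) {x : Lset γ} (hx : IsSuccLimit x.1) {c : Ordinal}
    (hc : c < x.1) : ∀ᶠ y in 𝓝 (ofLset x), c < (ofLset.symm y).1 := by
  by_cases hcS : blockStart c ∈ Lset γ
  · have hcx : c + 1 < x.1 := by rw [← succ_eq_add_one]; exact hx.succ_lt hc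
    have hS : blockStart (c + 1) ∈ Lset γ := by rwa [blockStart_add_one]
    let a : Lset γ := ⟨c + 1, Lset.add_one_mem (hcx.le.trans x.2.1)⟩
    have ha : ofLset a < ofLset x := (blockKey_lt_blockKey_iff (Or.inl hS)).2 hcx
    filter_upwards [lt_mem_nhds ha] with y hy
    exact (lt_add_one c).trans ((blockKey_lt_blockKey_iff (Or.inl hS)).1 hy)
  · have hxω : ω ∣ x.1 := isSuccPrelimit_iff_omega0_dvd.1 hx.isSuccPrelimit
    have hw := Lset.add_omega0_lt hγ x.2 hxω (omega0_dvd_blockStart c) hcS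
      ((blockStart_le c).trans_lt hc)
    have hwa : blockStart (blockStart c + ω + 1) = blockStart c + ω := by
      rw [blockStart_add_one, blockStart_eq_self ((omega0_dvd_blockStart c).add dvd_rfl)]
    let a : Lset γ := ⟨blockStart c + ω + 1, Lset.add_one_mem ((add_one_le_of_lt hw).trans x.2.1)⟩
    have ha : ofLset a < ofLset x :=
      blockKey_lt_blockKey_of_blockStart_lt (show blockStart a.1 < blockStart x.1 by
        rwa [hwa, blockStart_eq_self hxω])
    filter_upwards [lt_mem_nhds ha] with y hy
    calc c < blockStart c + ω := lt_blockStart_add_omega0 c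
      _ = blockStart a.1 := hwa.symm
      _ ≤ blockStart (ofLset.symm y).1 := blockStart_le_of_blockKey_lt hy
      _ ≤ (ofLset.symm y).1 := blockStart_le _

theorem eventually_val_lt {x : Lset γ} (hx : IsSuccLimit x.1) {c : Ordinal} (hc : x.1 < c) :
    ∀ᶠ y in 𝓝 (ofLset x), (ofLset.symm y).1 < c := by
  rcases x.2.1.lt_or_eq with hlt | htop
  · have hS : blockStart (x.1 + 1) ∈ Lset γ := by
      rw [blockStart_add_one]
      exact Lset.blockStart_mem_of_isSuccLimit hx
    let a : Lset γ := ⟨x.1 + 1, Lset.add_one_mem (add_one_le_of_lt hlt)⟩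
    have ha : ofLset x < ofLset a := (blockKey_lt_blockKey_iff (Or.inr hS)).2 (lt_add_one _)
    filter_upwards [gt_mem_nhds ha] with y hy
    exact ((blockKey_lt_blockKey_iff (Or.inr hS)).1 hy).trans_le (add_one_le_of_lt hc)
  · exact Eventually.of_forall fun y => ((ofLset.symm y).2.1.trans_eq htop.symm).trans_lt hc

theorem continuous_ofLset (hγ : ℵ₀ ≤ γ) : Continuous (ofLset : Lset γ → Reordered γ) := by
  refine continuous_iff_continuousAt.2 fun x => ?_
  by_cases hx : IsSuccLimit x.1
  · refine tendsto_order.2 ⟨fun a ha => ?_, fun b hb => ?_⟩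
    · obtain ⟨a, rfl⟩ := ofLset.surjective a
      exact eventually_lt_ofLset hγ hx ha
    · obtain ⟨b, rfl⟩ := ofLset.surjective b
      exact eventually_ofLset_lt hx hb
  · rw [ContinuousAt, (isOpen_singleton_iff_nhds_eq_pure x).1
      (Lset.isOpen_singleton_of_not_isSuccLimit hx)]
    exact tendsto_pure_nhds _ _

theorem continuous_ofLset_symm (hγ : ℵ₀ ≤ γ) :
    Continuous (ofLset.symm : Reordered γ → Lset γ) := by
  refine continuous_induced_rng.2 (continuous_iff_continuousAt.2 fun y => ?_)
  obtain ⟨x, rfl⟩ := ofLset.surjective y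
  by_cases hx : IsSuccLimit x.1
  · exact tendsto_order.2
      ⟨fun c hc => eventually_lt_val hγ hx hc, fun c hc => eventually_val_lt hx hc⟩
  · rw [ContinuousAt, (isOpen_singleton_iff_nhds_eq_pure _).1 (isOpen_singleton_ofLset_of_not_isSuccLimit hγ hx)]
    exact tendsto_pure_nhds _ _

end Lset.Reordered

/-- For every infinite cardinal `γ` there is a linear order `≺` on `L_γ` whose order
topology is the subspace topology of `L_γ`, and which agrees with the ordinal order on all
pairs containing a non-isolated point of `L_γ`. -/
theorem stmt_11 (γ : Cardinal) (hγ : Cardinal.aleph0 ≤ γ) :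
    ∃ lo : LinearOrder ↥(Lset γ),
      @Preorder.topology ↥(Lset γ) lo.toPreorder =
        (inferInstance : TopologicalSpace ↥(Lset γ)) ∧
      ∀ x y : ↥(Lset γ), NonIsolated x →
        (((x : Ordinal) < (y : Ordinal) → lo.lt x y) ∧
         ((y : Ordinal) < (x : Ordinal) → lo.lt y x)) := by
  refine ⟨(inferInstance : LinearOrder (Lset.Reordered γ)),
    le_antisymm (continuous_id_iff_le.1 (Lset.Reordered.continuous_ofLset_symm hγ))
      (continuous_id_iff_le.1 (Lset.Reordered.continuous_ofLset hγ)), fun x y hx => ?_⟩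
  have hS := Lset.blockStart_mem_of_isSuccLimit
    (not_not.1 (mt Lset.isOpen_singleton_of_not_isSuccLimit hx))
  exact ⟨(Ordinal.blockKey_lt_blockKey_iff (Or.inl hS)).2,
    (Ordinal.blockKey_lt_blockKey_iff (Or.inr hS)).2⟩
end

section
/- Let γ be an infinite cardinal and let I_γ = {α ≤ γ : α = 0, or α is a successor ordinal, or α = γ}, with the subspace topology from the order topology on the ordinals. Then the Cartesian product I_γ × I_γ with the product topology is homeomorphic to L_γ. -/
/-- `I_γ = {α ≤ γ : α = 0, or α is a successor, or α = γ}`. -/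
def Iset (γ : Cardinal) : Set Ordinal :=
  {α | α ≤ γ.ord ∧ (α = 0 ∨ (∃ β, α = β + 1) ∨ α = γ.ord)}

open Cardinal Ordinal Order Set Filter Topology

theorem Ordinal.not_isSuccLimit_iff {x : Ordinal} :
    ¬ IsSuccLimit x ↔ x = 0 ∨ ∃ β, x = β + 1 := by
  rcases zero_or_succ_or_isSuccLimit x with rfl | ⟨β, rfl⟩ | hx
  · simp
  · simp [← succ_eq_add_one]
  · refine iff_of_false (not_not.2 hx) ?_
    rintro (rfl | ⟨β, rfl⟩)
    · exact not_isSuccLimit_zero hx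
    · exact not_isSuccLimit_succ β (succ_eq_add_one β ▸ hx)

theorem Ordinal.eq_of_mul_add_eq_mul_add {g n n' s s' : Ordinal} (hs : s ≤ g) (hs' : s' ≤ g)
    (h0 : s = 0 → n = 0) (h0' : s' = 0 → n' = 0) (h : g * n + s = g * n' + s') :
    n = n' ∧ s = s' := by
  suffices key : ∀ {n n' s s' : Ordinal}, s ≤ g → (s' = 0 → n' = 0) →
      g * n + s = g * n' + s' → n' ≤ n by
    obtain rfl := (key hs h0' h).antisymm (key hs' h0 h.symm)
    exact ⟨rfl, add_left_cancel h⟩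
  intro n n' s s' hs h0' h
  by_contra! hlt
  have : g * n' + s' ≤ g * n' := calc
    g * n' + s' = g * n + s := h.symm
    _ ≤ g * (n + 1) := by rw [mul_add_one]; gcongr
    _ ≤ g * n' := by gcongr; exact add_one_le_of_lt hlt
  have hs' : s' = 0 := by simpa using this
  exact (h0' hs' ▸ hlt).not_ge bot_le

theorem Ordinal.two_mul_ne_two_mul_add_one (a b : Ordinal) : 2 * a ≠ 2 * b + 1 := by
  have h1 : 2 * a % 2 = 0 := by simp
  have h2 : (2 * b + 1) % 2 = 1 := by
    rw [mul_add_mod_self]; exact mod_eq_of_lt one_lt_two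
  exact fun h => zero_ne_one (h1.symm.trans (h ▸ h2))

namespace SuccOrder

variable {α : Type*} [LinearOrder α] [TopologicalSpace α] [OrderTopology α] [SuccOrder α]
  {S : Set α} {z : S}

theorem nhds_subtype_eq_pure [NoMaxOrder α] (hz : ¬ IsSuccLimit (z : α)) : 𝓝 z = pure z := by
  rw [nhds_subtype, SuccOrder.nhds_eq_pure.2 hz, comap_pure, ← image_singleton,
    preimage_image_eq _ Subtype.val_injective, principal_singleton]

theorem hasBasis_nhds_subtype_Ioc (hz : ∃ l, l < (z : α)) :
    (𝓝 z).HasBasis (· < (z : α)) fun c => Subtype.val ⁻¹' Ioc c z := by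
  rw [nhds_subtype]
  exact (hasBasis_nhds_Ioc_of_exists_lt hz).comap _

end SuccOrder

namespace Iset

variable {γ : Cardinal} {x s b : Ordinal}

theorem mem_iff : x ∈ Iset γ ↔ x ≤ γ.ord ∧ (¬ IsSuccLimit x ∨ x = γ.ord) := by
  simp [Iset, Ordinal.not_isSuccLimit_iff, or_assoc]

theorem ord_mem : γ.ord ∈ Iset γ := mem_iff.2 ⟨le_rfl, .inr rfl⟩

theorem zero_mem : 0 ∈ Iset γ := mem_iff.2 ⟨bot_le, .inl not_isSuccLimit_zero⟩

theorem not_isSuccLimit (hx : x ∈ Iset γ) (hlt : x < γ.ord) : ¬ IsSuccLimit x :=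
  (mem_iff.1 hx).2.resolve_right hlt.ne

theorem sub_mem (hγ : ℵ₀ ≤ γ) (hx : x ∈ Iset γ) (hb : b < γ.ord) : x - b ∈ Iset γ := by
  rcases (mem_iff.1 hx) with ⟨hxg, hx | rfl⟩
  · refine mem_iff.2 ⟨(sub_le_self x b).trans hxg, .inl fun hlim => hx ?_⟩
    have hbx : b < x := Ordinal.sub_ne_zero_iff_lt.1 hlim.ne_bot
    simpa [Ordinal.add_sub_cancel_of_le hbx.le] using isSuccLimit_add b hlim
  · rw [sub_eq_of_add_eq ((isPrincipal_add_ord hγ).add_eq_right hb)]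
    exact ord_mem

theorem add_mem (hγ : ℵ₀ ≤ γ) (hb : b < γ.ord) (hs : s ∈ Iset γ) (hs0 : s ≠ 0) :
    b + s ∈ Iset γ := by
  rcases (mem_iff.1 hs) with ⟨hsg, hs | rfl⟩
  · have hsg : s < γ.ord := hsg.lt_of_ne fun h => hs (h ▸ isSuccLimit_ord hγ)
    refine mem_iff.2 ⟨(isPrincipal_add_ord hγ hb hsg).le, .inl ?_⟩
    simp [isSuccLimit_add_iff, hs, hs0]
  · rw [(isPrincipal_add_ord hγ).add_eq_right hb]
    exact ord_mem

end Iset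

namespace Lset

variable {γ : Cardinal} {z n s : Ordinal}

theorem mem_iff : z ∈ Lset γ ↔ z ≤ γ.ord * γ.ord ∧
    (z = γ.ord * γ.ord ∨ ¬ IsSuccLimit z ∨ ∃ β, z = β + γ.ord) := by
  simp [Lset, Ordinal.not_isSuccLimit_iff, or_assoc]

theorem mul_add_mem (hn : n < γ.ord) (hs : s ∈ Iset γ) (h0 : s = 0 → n = 0) :
    γ.ord * n + s ∈ Lset γ := by
  obtain ⟨hsg, hs | rfl⟩ := Iset.mem_iff.1 hs
  · refine mem_iff.2 ⟨?_, .inr (.inl ?_)⟩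
    · calc γ.ord * n + s ≤ γ.ord * (n + 1) := by rw [mul_add_one]; gcongr
        _ ≤ γ.ord * γ.ord := by gcongr; exact add_one_le_of_lt hn
    · rcases eq_or_ne s 0 with rfl | hs0
      · simp [h0 rfl]
      · simp [isSuccLimit_add_iff, hs, hs0]
  · refine mem_iff.2 ⟨?_, .inr (.inr ⟨_, rfl⟩)⟩
    rw [← mul_add_one]
    gcongr
    exact add_one_le_of_lt hn

theorem exists_eq_mul_add (hγ : ℵ₀ ≤ γ) (hz : z ∈ Lset γ) (hz0 : z ≠ 0)
    (hztop : z ≠ γ.ord * γ.ord) :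
    ∃ n < γ.ord, ∃ s ∈ Iset γ, s ≠ 0 ∧ z = γ.ord * n + s := by
  have hg0 : γ.ord ≠ 0 := (isSuccLimit_ord hγ).ne_bot
  obtain ⟨hzle, hz | hz | ⟨β, rfl⟩⟩ := mem_iff.1 hz
  · exact absurd hz hztop
  · have hs0 : z % γ.ord ≠ 0 := fun h0 => hz <| by
      rw [← div_add_mod z γ.ord, h0, add_zero]
      refine isSuccLimit_mul_left (isSuccLimit_ord hγ) (pos_iff_ne_zero.2 fun hq => hz0 ?_)
      rw [← div_add_mod z γ.ord, h0, hq]; simp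
    refine ⟨z / γ.ord, (lt_mul_iff_div_lt hg0).1 (hzle.lt_of_ne hztop), z % γ.ord,
      Iset.mem_iff.2 ⟨(mod_lt z hg0).le, .inl fun hlim => hz ?_⟩, hs0, (div_add_mod z γ.ord).symm⟩
    rw [← div_add_mod z γ.ord]
    exact isSuccLimit_add _ hlim
  · have hβ : β < γ.ord * γ.ord := (le_add_right le_rfl).trans_lt (hzle.lt_of_ne hztop)
    refine ⟨β / γ.ord, (lt_mul_iff_div_lt hg0).1 hβ, γ.ord, Iset.ord_mem, hg0, ?_⟩
    conv_lhs => rw [← div_add_mod β γ.ord]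
    rw [add_assoc, (isPrincipal_add_ord hγ).add_eq_right (mod_lt β hg0)]

theorem sub_mem (hγ : ℵ₀ ≤ γ) (hz : z ∈ Lset γ) (hn : n < γ.ord) (hlt : γ.ord * n < z)
    (hle : z ≤ γ.ord * n + γ.ord) : z - γ.ord * n ∈ Iset γ := by
  have hztop : z ≠ γ.ord * γ.ord := by
    refine (hle.trans_lt ?_).ne
    rw [← mul_add_one]
    exact (mul_lt_mul_iff_right₀ (isSuccLimit_ord hγ).bot_lt).2 ((isSuccLimit_ord hγ).add_one_lt hn)
  obtain ⟨n', -, s', hs', hs'0, hz'⟩ := exists_eq_mul_add hγ hz (hlt.ne_bot) hztop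
  have hsub0 : z - γ.ord * n ≠ 0 := Ordinal.sub_ne_zero_iff_lt.2 hlt
  obtain ⟨-, h⟩ := eq_of_mul_add_eq_mul_add (sub_le.2 hle) (Iset.mem_iff.1 hs').1
    (absurd · hsub0) (absurd · hs'0) ((Ordinal.add_sub_cancel_of_le hlt.le).trans hz')
  exact h ▸ hs'

end Lset

namespace OrdinalPairing

variable {γ : Cardinal} {x y x' y' b m : Ordinal}

-- Enumerates the non-limit ordinals in increasing order: `rank 0 = 0`, `rank (β + 1) = 1 + β`.
noncomputable def rank (x : Ordinal) : Ordinal := Ordinal.pred (1 + x)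

@[simp]
theorem rank_zero : rank 0 = 0 := by
  simpa [rank] using pred_add_one (0 : Ordinal)

theorem rank_add_one (hx : ¬ IsSuccLimit x) : rank x + 1 = 1 + x := by
  rcases Ordinal.not_isSuccLimit_iff.1 hx with rfl | ⟨β, rfl⟩
  · simp
  · simp [rank, ← add_assoc]

theorem rank_le (x : Ordinal) : rank x ≤ 1 + x := pred_le_self _

theorem le_rank_of_lt (h : b < x) : b ≤ rank x := by
  refine le_of_not_gt fun hlt => (h.trans_le (le_add_left le_rfl : x ≤ 1 + x)).not_ge ?_
  exact (self_le_succ_pred _).trans (succ_le_of_lt hlt)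

theorem eq_of_rank_eq (hx : ¬ IsSuccLimit x) (hx' : ¬ IsSuccLimit x') (h : rank x = rank x') :
    x = x' := by
  have := rank_add_one hx
  rw [h, rank_add_one hx'] at this
  exact add_left_cancel this.symm

theorem exists_rank_eq (hγ : ℵ₀ ≤ γ) (hm : m < γ.ord) :
    ∃ x ∈ Iset γ, x < γ.ord ∧ rank x = m := by
  set x := m + 1 - 1
  have hx : 1 + x = m + 1 := Ordinal.add_sub_cancel_of_le (by simp)
  have hxg : x < γ.ord :=
    (le_add_left le_rfl).trans_lt (hx ▸ (isSuccLimit_ord hγ).add_one_lt hm)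
  have hxlim : ¬ IsSuccLimit x := fun hlim => by
    simpa [hx] using isSuccLimit_add 1 hlim
  refine ⟨x, Iset.mem_iff.2 ⟨hxg.le, .inl hxlim⟩, hxg, ?_⟩
  simp [rank, hx]

theorem two_mul_rank_add_one_lt (hγ : ℵ₀ ≤ γ) (hx : x < γ.ord) : 2 * rank x + 1 < γ.ord := by
  have hg := isSuccLimit_ord hγ
  have hr : rank x < γ.ord := (rank_le x).trans_lt
    (isPrincipal_add_ord hγ (one_lt_of_isSuccLimit hg) hx)
  exact hg.add_one_lt (isPrincipal_mul_ord hγ (by simpa using natCast_lt_of_isSuccLimit hg 2) hr)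

noncomputable def block (x y : Ordinal) : Ordinal :=
  if x ≤ y then 2 * rank x else 2 * rank y + 1

-- Subtracting `pred x` rather than `x` makes the offset in a column nonzero away from the origin,
-- as every block but the first misses its left end `γ·n`.
noncomputable def offset (x y : Ordinal) : Ordinal :=
  if x ≤ y then y - Ordinal.pred x else x - y

theorem two_mul_rank_min_le_block (x y : Ordinal) : 2 * rank (min x y) ≤ block x y := by
  unfold block
  split_ifs with h
  · rw [min_eq_left h]
  · rw [min_eq_right (not_le.1 h).le]; exact le_self_add

theorem block_le (x y : Ordinal) : block x y ≤ 2 * rank (min x y) + 1 := by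
  unfold block
  split_ifs with h
  · rw [min_eq_left h]; exact le_self_add
  · rw [min_eq_right (not_le.1 h).le]

theorem block_lt (hγ : ℵ₀ ≤ γ) (hm : min x y < γ.ord) : block x y < γ.ord :=
  (block_le x y).trans_lt (two_mul_rank_add_one_lt hγ hm)

theorem offset_le_max (x y : Ordinal) : offset x y ≤ max x y := by
  unfold offset
  split_ifs with h
  · exact (Ordinal.sub_le_self _ _).trans (le_max_right x y)
  · exact (Ordinal.sub_le_self _ _).trans (le_max_left x y)

theorem offset_mem (hγ : ℵ₀ ≤ γ) (hx : x ∈ Iset γ) (hy : y ∈ Iset γ) (hm : min x y < γ.ord) :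
    offset x y ∈ Iset γ := by
  unfold offset
  split_ifs with h
  · rw [min_eq_left h] at hm
    exact Iset.sub_mem hγ hy ((pred_le_self x).trans_lt hm)
  · rw [min_eq_right (not_le.1 h).le] at hm
    exact Iset.sub_mem hγ hx hm

theorem block_eq_zero_of_offset_eq_zero (hx : x ∈ Iset γ) (hm : min x y < γ.ord)
    (h : offset x y = 0) : block x y = 0 := by
  unfold offset at h
  split_ifs at h with hxy
  · rw [min_eq_left hxy] at hm
    have hpred : Ordinal.pred x = x :=
      (pred_le_self x).antisymm (hxy.trans (Ordinal.sub_eq_zero_iff_le.1 h))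
    have hx0 : x = 0 := by
      by_contra hx0
      exact Iset.not_isSuccLimit hx hm
        (isSuccLimit_iff.2 ⟨hx0, pred_eq_iff_isSuccPrelimit.1 hpred⟩)
    subst hx0
    have hy0 : y = 0 := by simpa using h
    subst hy0
    simp [block]
  · exact absurd (Ordinal.sub_eq_zero_iff_le.1 h) hxy

theorem eq_of_block_eq_of_offset_eq (hx : x ∈ Iset γ) (hy : y ∈ Iset γ) (hx' : x' ∈ Iset γ)
    (hy' : y' ∈ Iset γ) (hm : min x y < γ.ord) (hm' : min x' y' < γ.ord)
    (hb : block x y = block x' y') (ho : offset x y = offset x' y') : x = x' ∧ y = y' := by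
  unfold block at hb
  unfold offset at ho
  split_ifs at hb ho with hxy hxy' hxy'
  · rw [min_eq_left hxy] at hm
    rw [min_eq_left hxy'] at hm'
    obtain rfl : x = x' := eq_of_rank_eq (Iset.not_isSuccLimit hx hm) (Iset.not_isSuccLimit hx' hm')
      (by simpa using hb)
    refine ⟨rfl, ?_⟩
    simpa [Ordinal.add_sub_cancel_of_le ((pred_le_self x).trans hxy),
      Ordinal.add_sub_cancel_of_le ((pred_le_self x).trans hxy')] using
      congrArg (Ordinal.pred x + ·) ho
  · exact absurd hb (two_mul_ne_two_mul_add_one _ _)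
  · exact absurd hb.symm (two_mul_ne_two_mul_add_one _ _)
  · rw [min_eq_right (not_le.1 hxy).le] at hm
    rw [min_eq_right (not_le.1 hxy').le] at hm'
    obtain rfl : y = y' := eq_of_rank_eq (Iset.not_isSuccLimit hy hm) (Iset.not_isSuccLimit hy' hm')
      (by simpa using hb)
    refine ⟨?_, rfl⟩
    simpa [Ordinal.add_sub_cancel_of_le (not_le.1 hxy).le,
      Ordinal.add_sub_cancel_of_le (not_le.1 hxy').le] using congrArg (y + ·) ho

noncomputable def pairing (γ : Cardinal) (x y : Ordinal) : Ordinal :=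
  if min x y < γ.ord then γ.ord * block x y + offset x y else γ.ord * γ.ord

theorem pairing_of_min_lt (hm : min x y < γ.ord) :
    pairing γ x y = γ.ord * block x y + offset x y := if_pos hm

theorem pairing_ord_ord : pairing γ γ.ord γ.ord = γ.ord * γ.ord := by
  simp [pairing]

theorem pairing_of_pred_lt (hx : x < γ.ord) (h : Ordinal.pred x < y) :
    pairing γ x y = γ.ord * (2 * rank x) + (y - Ordinal.pred x) := by
  have hxy : x ≤ y := (self_le_succ_pred x).trans (succ_le_of_lt h)
  simp [pairing, block, offset, hxy, hx]

theorem pairing_of_lt (hy : y < γ.ord) (h : y < x) :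
    pairing γ x y = γ.ord * (2 * rank y + 1) + (x - y) := by
  simp [pairing, block, offset, h.not_ge, h.le, hy]

theorem pairing_mem (hγ : ℵ₀ ≤ γ) (hx : x ∈ Iset γ) (hy : y ∈ Iset γ) :
    pairing γ x y ∈ Lset γ := by
  by_cases hm : min x y < γ.ord
  · rw [pairing_of_min_lt hm]
    exact Lset.mul_add_mem (block_lt hγ hm) (offset_mem hγ hx hy hm)
      (block_eq_zero_of_offset_eq_zero hx hm)
  · simp only [pairing, if_neg hm]
    exact Lset.mem_iff.2 ⟨le_rfl, .inl rfl⟩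

theorem pairing_lt (hγ : ℵ₀ ≤ γ) (hx : x ∈ Iset γ) (hy : y ∈ Iset γ) (hm : min x y < γ.ord) :
    pairing γ x y < γ.ord * γ.ord := by
  rw [pairing_of_min_lt hm]
  calc γ.ord * block x y + offset x y ≤ γ.ord * (block x y + 1) := by
        rw [mul_add_one]; gcongr; exact (Iset.mem_iff.1 (offset_mem hγ hx hy hm)).1
    _ < γ.ord * γ.ord := (mul_lt_mul_iff_right₀ (isSuccLimit_ord hγ).bot_lt).2
        ((isSuccLimit_ord hγ).add_one_lt (block_lt hγ hm))

theorem eq_ord_of_not_min_lt (hx : x ∈ Iset γ) (hy : y ∈ Iset γ) (hm : ¬ min x y < γ.ord) :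
    x = γ.ord ∧ y = γ.ord := by
  obtain ⟨hxg, hyg⟩ := le_min_iff.1 (not_lt.1 hm)
  exact ⟨(Iset.mem_iff.1 hx).1.antisymm hxg, (Iset.mem_iff.1 hy).1.antisymm hyg⟩

theorem eq_of_pairing_eq (hγ : ℵ₀ ≤ γ) (hx : x ∈ Iset γ) (hy : y ∈ Iset γ) (hx' : x' ∈ Iset γ)
    (hy' : y' ∈ Iset γ) (h : pairing γ x y = pairing γ x' y') : x = x' ∧ y = y' := by
  by_cases hm : min x y < γ.ord <;> by_cases hm' : min x' y' < γ.ord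
  · rw [pairing_of_min_lt hm, pairing_of_min_lt hm'] at h
    obtain ⟨hb, ho⟩ := eq_of_mul_add_eq_mul_add (Iset.mem_iff.1 (offset_mem hγ hx hy hm)).1
      (Iset.mem_iff.1 (offset_mem hγ hx' hy' hm')).1 (block_eq_zero_of_offset_eq_zero hx hm)
      (block_eq_zero_of_offset_eq_zero hx' hm') h
    exact eq_of_block_eq_of_offset_eq hx hy hx' hy' hm hm' hb ho
  · obtain ⟨rfl, rfl⟩ := eq_ord_of_not_min_lt hx' hy' hm'
    exact absurd (h.trans pairing_ord_ord) (pairing_lt hγ hx hy hm).ne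
  · obtain ⟨rfl, rfl⟩ := eq_ord_of_not_min_lt hx hy hm
    exact absurd (h.symm.trans pairing_ord_ord) (pairing_lt hγ hx' hy' hm').ne
  · obtain ⟨rfl, rfl⟩ := eq_ord_of_not_min_lt hx hy hm
    obtain ⟨rfl, rfl⟩ := eq_ord_of_not_min_lt hx' hy' hm'
    exact ⟨rfl, rfl⟩

theorem exists_pairing_eq (hγ : ℵ₀ ≤ γ) {z : Ordinal} (hz : z ∈ Lset γ) :
    ∃ x ∈ Iset γ, ∃ y ∈ Iset γ, pairing γ x y = z := by
  rcases eq_or_ne z 0 with rfl | hz0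
  · refine ⟨0, Iset.zero_mem, 0, Iset.zero_mem, ?_⟩
    simp [pairing, block, offset]
  rcases eq_or_ne z (γ.ord * γ.ord) with rfl | hztop
  · exact ⟨_, Iset.ord_mem, _, Iset.ord_mem, pairing_ord_ord⟩
  obtain ⟨n, hn, s, hs, hs0, rfl⟩ := Lset.exists_eq_mul_add hγ hz hz0 hztop
  obtain ⟨w, hw, hwg, hwn⟩ :=
    exists_rank_eq hγ ((div_le_of_le_mul (le_mul_right n two_pos)).trans_lt hn)
  have hn2 := div_add_mod n 2
  rw [← hwn] at hn2
  rcases Order.le_one_iff.1 (lt_two_iff.1 (mod_lt n two_ne_zero)) with h | h <;> rw [h] at hn2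
  · refine ⟨w, hw, Ordinal.pred w + s, Iset.add_mem hγ ((pred_le_self w).trans_lt hwg) hs hs0, ?_⟩
    rw [pairing_of_pred_lt hwg (lt_add_of_pos_right _ (pos_iff_ne_zero.2 hs0)), add_sub_cancel,
      ← hn2, add_zero]
  · refine ⟨w + s, Iset.add_mem hγ hwg hs hs0, w, hw, ?_⟩
    rw [pairing_of_lt hwg (lt_add_of_pos_right _ (pos_iff_ne_zero.2 hs0)), add_sub_cancel, hn2]

theorem mul_le_pairing (hx : x ∈ Iset γ) (hy : y ∈ Iset γ) (hb : b < min x y) :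
    γ.ord * b ≤ pairing γ x y := by
  by_cases hm : min x y < γ.ord
  · rw [pairing_of_min_lt hm]
    refine le_add_right ?_
    gcongr
    calc b ≤ rank (min x y) := le_rank_of_lt hb
      _ ≤ 2 * rank (min x y) := le_mul_right _ two_pos
      _ ≤ block x y := two_mul_rank_min_le_block x y
  · obtain ⟨rfl, rfl⟩ := eq_ord_of_not_min_lt hx hy hm
    rw [pairing_ord_ord]
    gcongr
    simpa using hb.le

theorem pairing_le_mul (hγ : ℵ₀ ≤ γ) (hx : x ∈ Iset γ) (hy : y ∈ Iset γ)
    (hm : min x y < γ.ord) : pairing γ x y ≤ γ.ord * (2 * (1 + min x y) + 2) := by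
  rw [pairing_of_min_lt hm]
  calc γ.ord * block x y + offset x y ≤ γ.ord * (block x y + 1) := by
        rw [mul_add_one]; gcongr; exact (Iset.mem_iff.1 (offset_mem hγ hx hy hm)).1
    _ ≤ γ.ord * (2 * rank (min x y) + 1 + 1) := by gcongr; exact block_le x y
    _ ≤ γ.ord * (2 * (1 + min x y) + 2) := by
        rw [add_assoc, one_add_one_eq_two]; gcongr; exact rank_le _

theorem map_nhds_ord_of_translation (hγ : ℵ₀ ≤ γ) {f : Iset γ → Lset γ} {n b : Ordinal}
    (hn : n < γ.ord) (hb : b < γ.ord)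
    (hf : ∀ y : Iset γ, b < y → (f y : Ordinal) = γ.ord * n + (y - b)) :
    map f (𝓝 ⟨γ.ord, Iset.ord_mem⟩) = 𝓝 (f ⟨γ.ord, Iset.ord_mem⟩) := by
  have hg := isSuccLimit_ord hγ
  have hftop : (f ⟨γ.ord, Iset.ord_mem⟩ : Ordinal) = γ.ord * n + γ.ord := by
    rw [hf _ hb, sub_eq_of_add_eq ((isPrincipal_add_ord hγ).add_eq_right hb)]
  refine ((SuccOrder.hasBasis_nhds_subtype_Ioc ⟨0, hg.bot_lt⟩).map f).ext
    (SuccOrder.hasBasis_nhds_subtype_Ioc ⟨0, hftop ▸ hg.bot_lt.trans_le le_add_self⟩) ?_ ?_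
  · intro c hc
    refine ⟨γ.ord * n + (max c b - b), ?_, ?_⟩
    · rw [hftop]
      exact (add_lt_add_iff_left _).2 ((Ordinal.sub_le_self _ _).trans_lt (max_lt hc hb))
    · rintro z ⟨hcz, hzf⟩
      rw [hftop] at hzf
      have hs := Lset.sub_mem hγ z.2 hn (le_self_add.trans_lt hcz) hzf
      have hz : γ.ord * n + (z - γ.ord * n) = z :=
        Ordinal.add_sub_cancel_of_le (le_self_add.trans hcz.le)
      have hbs : max c b - b < z - γ.ord * n := lt_of_add_lt_add_left (hz.symm ▸ hcz)
      refine ⟨⟨b + (z - γ.ord * n), Iset.add_mem hγ hb hs hbs.ne_bot⟩,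
        ⟨?_, (Iset.mem_iff.1 (Iset.add_mem hγ hb hs hbs.ne_bot)).1⟩, Subtype.ext ?_⟩
      · calc c ≤ max c b := le_max_left c b
          _ = b + (max c b - b) := (Ordinal.add_sub_cancel_of_le (le_max_right c b)).symm
          _ < b + (z - γ.ord * n) := (add_lt_add_iff_left b).2 hbs
      · rw [hf _ (lt_add_of_pos_right _ hbs.ne_bot.bot_lt), Ordinal.add_sub_cancel, hz]
  · intro c hc
    rw [hftop] at hc
    refine ⟨b + (c - γ.ord * n), isPrincipal_add_ord hγ hb (sub_lt_of_lt_add hc hg.bot_lt), ?_⟩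
    rintro _ ⟨y, ⟨hby, hyg⟩, rfl⟩
    rw [mem_preimage, hf y (le_self_add.trans_lt hby), hftop]
    exact ⟨(le_add_sub c _).trans_lt ((add_lt_add_iff_left _).2 (lt_sub.2 hby)),
      (add_le_add_iff_left _).2 ((Ordinal.sub_le_self _ _).trans hyg)⟩

noncomputable def pairingMap (hγ : ℵ₀ ≤ γ) (p : Iset γ × Iset γ) : Lset γ :=
  ⟨pairing γ p.1 p.2, pairing_mem hγ p.1.2 p.2.2⟩

theorem map_nhds_pairingMap_ord_ord (hγ : ℵ₀ ≤ γ) :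
    map (pairingMap hγ) (𝓝 (⟨γ.ord, Iset.ord_mem⟩, ⟨γ.ord, Iset.ord_mem⟩)) =
      𝓝 (pairingMap hγ (⟨γ.ord, Iset.ord_mem⟩, ⟨γ.ord, Iset.ord_mem⟩)) := by
  have hg := isSuccLimit_ord hγ
  have hval : (pairingMap hγ (⟨γ.ord, Iset.ord_mem⟩, ⟨γ.ord, Iset.ord_mem⟩) : Ordinal) =
      γ.ord * γ.ord := pairing_ord_ord
  rw [nhds_prod_eq]
  refine (((SuccOrder.hasBasis_nhds_subtype_Ioc ⟨0, hg.bot_lt⟩).prod_self).map _).ext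
    (SuccOrder.hasBasis_nhds_subtype_Ioc ⟨0, hval ▸ (mul_pos hg.bot_lt hg.bot_lt)⟩) ?_ ?_
  · intro c hc
    have htwo : (2 : Ordinal) < γ.ord := by simpa using natCast_lt_of_isSuccLimit hg 2
    refine ⟨γ.ord * (2 * (1 + c) + 2), ?_, ?_⟩
    · rw [hval]
      refine (mul_lt_mul_iff_right₀ hg.bot_lt).2 (isPrincipal_add_ord hγ ?_ htwo)
      exact isPrincipal_mul_ord hγ htwo (isPrincipal_add_ord hγ (one_lt_of_isSuccLimit hg) hc)
    · rintro z ⟨hcz, -⟩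
      obtain ⟨x, hx, y, hy, hxy⟩ := exists_pairing_eq hγ z.2
      have hcm : c < min x y := by
        by_contra! hmc
        refine (pairing_le_mul hγ hx hy (hmc.trans_lt hc)).not_gt (hxy ▸ ?_)
        exact lt_of_le_of_lt (by gcongr) hcz
      refine ⟨(⟨x, hx⟩, ⟨y, hy⟩), ⟨⟨(lt_min_iff.1 hcm).1, (Iset.mem_iff.1 hx).1⟩,
        ⟨(lt_min_iff.1 hcm).2, (Iset.mem_iff.1 hy).1⟩⟩, Subtype.ext hxy⟩
  · intro d hd
    rw [hval] at hd
    refine ⟨d / γ.ord + 1, hg.add_one_lt ((lt_mul_iff_div_lt hg.ne_bot).1 hd), ?_⟩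
    rintro _ ⟨⟨x, y⟩, ⟨⟨hx, -⟩, ⟨hy, -⟩⟩, rfl⟩
    refine ⟨(lt_mul_div_add d hg.ne_bot).trans_le ?_, hval ▸ (pairing_mem hγ x.2 y.2).1⟩
    rw [← mul_add_one]
    exact mul_le_pairing x.2 y.2 (lt_min hx hy)

theorem not_isSuccLimit_pairing (hγ : ℵ₀ ≤ γ) (hx : x ∈ Iset γ) (hy : y ∈ Iset γ)
    (hxg : x < γ.ord) (hyg : y < γ.ord) : ¬ IsSuccLimit (pairing γ x y) := by
  have hm : min x y < γ.ord := min_lt_of_left_lt hxg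
  rw [pairing_of_min_lt hm, isSuccLimit_add_iff]
  rintro (hlim | ⟨h0, hlim⟩)
  · exact Iset.not_isSuccLimit (offset_mem hγ hx hy hm)
      ((offset_le_max x y).trans_lt (max_lt hxg hyg)) hlim
  · rw [block_eq_zero_of_offset_eq_zero hx hm h0, mul_zero] at hlim
    exact not_isSuccLimit_zero hlim

theorem map_nhds_pairingMap (hγ : ℵ₀ ≤ γ) (p : Iset γ × Iset γ) :
    map (pairingMap hγ) (𝓝 p) = 𝓝 (pairingMap hγ p) := by
  obtain ⟨⟨x, hx⟩, ⟨y, hy⟩⟩ := p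
  rw [nhds_prod_eq]
  rcases (Iset.mem_iff.1 hx).1.lt_or_eq with hxg | rfl <;>
    rcases (Iset.mem_iff.1 hy).1.lt_or_eq with hyg | rfl
  · rw [SuccOrder.nhds_subtype_eq_pure (Iset.not_isSuccLimit hx hxg),
      SuccOrder.nhds_subtype_eq_pure (Iset.not_isSuccLimit hy hyg), prod_pure_pure, map_pure,
      SuccOrder.nhds_subtype_eq_pure (not_isSuccLimit_pairing hγ hx hy hxg hyg)]
  · rw [SuccOrder.nhds_subtype_eq_pure (Iset.not_isSuccLimit hx hxg), pure_prod, map_map]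
    exact map_nhds_ord_of_translation hγ ((lt_add_one _).trans (two_mul_rank_add_one_lt hγ hxg))
      ((pred_le_self x).trans_lt hxg) fun y hy => pairing_of_pred_lt hxg hy
  · rw [SuccOrder.nhds_subtype_eq_pure (z := ⟨y, hy⟩) (Iset.not_isSuccLimit hy hyg), prod_pure,
      map_map]
    exact map_nhds_ord_of_translation hγ (two_mul_rank_add_one_lt hγ hyg) hyg
      fun x hx => pairing_of_lt hyg hx
  · rw [← nhds_prod_eq]
    exact map_nhds_pairingMap_ord_ord hγ

theorem bijective_pairingMap (hγ : ℵ₀ ≤ γ) : Function.Bijective (pairingMap hγ) := by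
  refine ⟨fun p q h => ?_, fun z => ?_⟩
  · obtain ⟨h1, h2⟩ := eq_of_pairing_eq hγ p.1.2 p.2.2 q.1.2 q.2.2 (congrArg Subtype.val h)
    exact Prod.ext (Subtype.ext h1) (Subtype.ext h2)
  · obtain ⟨x, hx, y, hy, hxy⟩ := exists_pairing_eq hγ z.2
    exact ⟨(⟨x, hx⟩, ⟨y, hy⟩), Subtype.ext hxy⟩

end OrdinalPairing

/-- For every infinite cardinal `γ`, the product `I_γ × I_γ` (product of subspace
topologies) is homeomorphic to `L_γ`. -/
theorem stmt_12 (γ : Cardinal) (hγ : Cardinal.aleph0 ≤ γ) :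
    Nonempty ((↥(Iset γ) × ↥(Iset γ)) ≃ₜ ↥(Lset γ)) :=
  ⟨(Equiv.ofBijective _ (OrdinalPairing.bijective_pairingMap hγ)).toHomeomorphOfContinuousOpen
    (continuous_iff_continuousAt.2 fun p => (OrdinalPairing.map_nhds_pairingMap hγ p).le)
    (IsOpenMap.of_nhds_le fun p => (OrdinalPairing.map_nhds_pairingMap hγ p).ge)⟩
end

section
/- Let γ be an infinite cardinal and let I_γ = {α ≤ γ : α = 0, or α is a successor ordinal, or α = γ}, with the subspace topology from the order topology on the ordinals. Then for every ordinal α < γ, the subspace {β ∈ I_γ : α ≤ β} = [α, γ] ∩ I_γ is homeomorphic to I_γ. -/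
/-!
For `s ∈ I_γ` below `κ = γ.ord`, left addition `x ↦ s + x` is a normal function, hence a
topological embedding of the ordinals into themselves. It sends `0` to `s`, successors to
successors, and fixes `κ` (which is additively principal), so it carries `I_γ` homeomorphically
onto the final segment `{β ∈ I_γ | s ≤ β}`. Every final segment `{β ∈ I_γ | α ≤ β}` with
`0 < α < κ` is of this form, with `s = succ (pred α)`.
-/

open Cardinal Ordinal Order Set Topology

theorem StrictMono.isEmbedding_of_continuous {α β : Type*} [LinearOrder α] [TopologicalSpace α]
    [h : OrderTopology α] [Preorder β] [TopologicalSpace β] [OrderTopology β] {f : α → β}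
    (hf : StrictMono f) (hc : Continuous f) : IsEmbedding f :=
  ⟨⟨le_antisymm (continuous_iff_le_induced.1 hc)
      (h.topology_eq_generate_intervals ▸ induced_topology_le_preorder hf.lt_iff_lt)⟩,
    hf.injective⟩

theorem Ordinal.isEmbedding_add_right (a : Ordinal) : IsEmbedding (a + ·) :=
  (isNormal_add_right a).strictMono.isEmbedding_of_continuous (isNormal_add_right a).continuous

section Iset

variable {γ : Cardinal} {s : Ordinal}

theorem ord_mem_Iset (γ : Cardinal) : γ.ord ∈ Iset γ :=
  ⟨le_rfl, Or.inr (Or.inr rfl)⟩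

theorem add_mem_Iset (hγ : ℵ₀ ≤ γ) (hs : s ∈ Iset γ) (hsγ : s < γ.ord) {x : Ordinal}
    (hx : x ∈ Iset γ) : s + x ∈ Iset γ := by
  have hsκ : s + γ.ord = γ.ord := (isPrincipal_add_ord hγ).add_eq_right hsγ
  obtain ⟨hxκ, rfl | ⟨δ, rfl⟩ | rfl⟩ := hx
  · simpa using hs
  · exact ⟨hsκ ▸ add_le_add_right hxκ s, Or.inr (Or.inl ⟨s + δ, (add_assoc _ _ _).symm⟩)⟩
  · exact hsκ.symm ▸ ord_mem_Iset γ

theorem exists_add_eq_of_le (hγ : ℵ₀ ≤ γ) (hsγ : s < γ.ord) {β : Ordinal} (hβ : β ∈ Iset γ)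
    (hsβ : s ≤ β) : ∃ x ∈ Iset γ, s + x = β := by
  obtain ⟨hβκ, rfl | ⟨δ, rfl⟩ | rfl⟩ := hβ
  · exact ⟨0, ⟨zero_le, Or.inl rfl⟩, by simpa using hsβ⟩
  · have hsub := Ordinal.add_sub_cancel_of_le hsβ
    refine ⟨δ + 1 - s, ⟨(Ordinal.sub_le_self _ _).trans hβκ, ?_⟩, hsub⟩
    rcases zero_or_succ_or_isSuccLimit (δ + 1 - s) with h | ⟨ε, h⟩ | h
    · exact Or.inl h
    · exact Or.inr (Or.inl ⟨ε, by rw [← h, succ_eq_add_one]⟩)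
    · have hlim := isSuccLimit_add s h
      rw [hsub, ← succ_eq_add_one] at hlim
      exact absurd hlim (not_isSuccLimit_succ δ)
  · exact ⟨γ.ord, ord_mem_Iset γ, (isPrincipal_add_ord hγ).add_eq_right hsγ⟩

theorem image_add_Iset (hγ : ℵ₀ ≤ γ) (hs : s ∈ Iset γ) (hsγ : s < γ.ord) :
    (s + ·) '' Iset γ = {β ∈ Iset γ | s ≤ β} := by
  ext β
  constructor
  · rintro ⟨x, hx, rfl⟩
    exact ⟨add_mem_Iset hγ hs hsγ hx, le_self_add⟩
  · rintro ⟨hβ, hsβ⟩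
    exact exists_add_eq_of_le hγ hsγ hβ hsβ

theorem sep_Iset_le_eq_sep_succ_pred_le {α : Ordinal} (hα0 : α ≠ 0) (hα : α < γ.ord) :
    {β ∈ Iset γ | α ≤ β} = {β ∈ Iset γ | succ (pred α) ≤ β} := by
  ext β
  refine and_congr_right fun hβ => ⟨fun hαβ => ?_, (pred_le_iff_le_succ.1 le_rfl).trans⟩
  obtain ⟨-, rfl | ⟨δ, rfl⟩ | rfl⟩ := hβ
  · exact absurd (nonpos_iff_eq_zero.1 hαβ) hα0
  · rw [← succ_eq_add_one] at hαβ ⊢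
    exact succ_le_succ (pred_le_iff_le_succ.2 hαβ)
  · exact succ_le_of_lt ((pred_le_self α).trans_lt hα)

end Iset

/-- For an infinite cardinal `γ` and any ordinal `α < γ`, the final segment
`[α, γ] ∩ I_γ` of `I_γ` is homeomorphic to `I_γ`. -/
theorem stmt_16 (γ : Cardinal) (hγ : Cardinal.aleph0 ≤ γ) (α : Ordinal) (hα : α < γ.ord) :
    Nonempty (↥{β ∈ Iset γ | α ≤ β} ≃ₜ ↥(Iset γ)) := by
  rcases eq_or_ne α 0 with rfl | hα0
  · exact ⟨Homeomorph.setCongr (sep_eq_self_iff_mem_true.2 fun _ _ => zero_le)⟩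
  set s := succ (pred α)
  have hsγ : s < γ.ord := (isSuccLimit_ord hγ).succ_lt ((pred_le_self α).trans_lt hα)
  have hs : s ∈ Iset γ := ⟨hsγ.le, Or.inr (Or.inl ⟨pred α, succ_eq_add_one _⟩)⟩
  rw [sep_Iset_le_eq_sep_succ_pred_le hα0 hα, ← image_add_Iset hγ hs hsγ]
  exact ⟨((isEmbedding_add_right s).homeomorphImage _).symm⟩
end

section
/- Let X = {α : α ≤ ω} with the usual ordinal order, and let X ×ₗ X denote X × X with the lexicographic order and the order topology induced by that lexicographic order. Let Y = (X ×ₗ X) \ {⟨ω, n⟩ : 1 ≤ n < ω}, with the subspace topology from X ×ₗ X. Then Y is homeomorphic to X ×ₗ X. -/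
/-- `X = {α : α ≤ ω}` with its usual order. -/
abbrev Xomega : Type 1 := {α : Ordinal // α ≤ Ordinal.omega0}

/-- The order topology of the lexicographic order on `X ×ₗ X`. -/
noncomputable instance : TopologicalSpace (Xomega ×ₗ Xomega) :=
  Preorder.topology (Xomega ×ₗ Xomega)

/-- `Y = (X ×ₗ X) \ {⟨ω, n⟩ : 1 ≤ n < ω}`. -/
def Y19 : Set (Xomega ×ₗ Xomega) :=
  {p | ¬(((ofLex p).1 : Ordinal) = Ordinal.omega0 ∧
      1 ≤ ((ofLex p).2 : Ordinal) ∧ ((ofLex p).2 : Ordinal) < Ordinal.omega0)}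

/-!
Identify `X` with `ℕ∞`. Moving every column `{a} × X` to `{a + 1} × X` (which fixes `(ω, 0)`)
maps `[(0, 0), (ω, 0)]` onto `[(1, 0), (ω, 0)]`; the isolated point `(ω, 1)` goes to
the point `(ω, ω)`, which is isolated in `Y`; and the tail `(ω, b)`, `b ≥ 2`, is folded onto the
first column as `(0, b - 2)`. This bijection `X ×ₗ X → Y` is strictly monotone, with order-convex
image, on each piece of a partition of `X ×ₗ X` into three open intervals, hence continuous; as
`X ×ₗ X` is a compact well-order, it is a homeomorphism.
-/

open Set Ordinal

section OrderTopology

variable {α β : Type*} [LinearOrder α] [TopologicalSpace α] [OrderTopology α]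
  [LinearOrder β] [TopologicalSpace β] [OrderTopology β]

theorem StrictMonoOn.continuousOn_of_ordConnected {f : α → β} {s : Set α} [s.OrdConnected]
    (hf : StrictMonoOn f s) (hfs : (f '' s).OrdConnected) : ContinuousOn f s := by
  rw [continuousOn_iff_continuous_domRestrict]
  exact continuous_subtype_val.comp (hf.orderIso f s).continuous

attribute [local instance] WellFoundedLT.toOrderBot
  WellFoundedLT.conditionallyCompleteLinearOrderBot in
theorem compactSpace_of_wellFoundedLT [WellFoundedLT α] [OrderTop α] : CompactSpace α :=
  ⟨by simpa using isCompact_Icc (a := (⊥ : α)) (b := ⊤)⟩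

end OrderTopology

namespace ENat

universe u

def toOrdinal : ℕ∞ → Ordinal.{u} := ENat.recTopCoe ω Nat.cast

@[simp] theorem toOrdinal_top : toOrdinal ⊤ = ω := rfl

@[simp] theorem toOrdinal_natCast (n : ℕ) : toOrdinal n = n := rfl

@[simp] theorem toOrdinal_one : toOrdinal 1 = 1 := Nat.cast_one

theorem strictMono_toOrdinal : StrictMono toOrdinal := by
  intro a b h
  induction b with
  | top =>
    obtain ⟨n, rfl⟩ := ENat.ne_top_iff_exists.1 h.ne
    exact natCast_lt_omega0 n
  | coe n =>
    obtain ⟨m, rfl⟩ := ENat.ne_top_iff_exists.1 (h.trans (natCast_lt_top n)).ne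
    simpa using h

theorem toOrdinal_le_omega0 (n : ℕ∞) : toOrdinal n ≤ ω :=
  strictMono_toOrdinal.monotone le_top

theorem exists_toOrdinal_eq {o : Ordinal} (ho : o ≤ ω) : ∃ n, toOrdinal n = o := by
  rcases ho.lt_or_eq with ho | rfl
  · obtain ⟨n, rfl⟩ := lt_omega0.1 ho
    exact ⟨n, rfl⟩
  · exact ⟨⊤, rfl⟩

noncomputable def orderIsoXomega : ℕ∞ ≃o Xomega :=
  StrictMono.orderIsoOfSurjective (fun n => ⟨toOrdinal n, toOrdinal_le_omega0 n⟩)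
    (fun _ _ h => strictMono_toOrdinal h)
    (fun o => (exists_toOrdinal_eq o.2).imp fun _ h => Subtype.ext h)

@[simp] theorem coe_orderIsoXomega (n : ℕ∞) : (orderIsoXomega n : Ordinal) = toOrdinal n := rfl

def lexPunctured : Set (ℕ∞ ×ₗ ℕ∞) :=
  {p | ¬((ofLex p).1 = ⊤ ∧ 1 ≤ (ofLex p).2 ∧ (ofLex p).2 < ⊤)}

theorem toLex_mem_lexPunctured {a b : ℕ∞} :
    toLex (a, b) ∈ lexPunctured ↔ (a = ⊤ → b = 0 ∨ b = ⊤) := by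
  simp only [lexPunctured, mem_ofPred_eq, ofLex_toLex, not_and, Order.one_le_iff_ne_zero,
    lt_top_iff_ne_top, not_not]
  tauto

theorem prodLexCongr_orderIsoXomega_mem_Y19 (p : ℕ∞ ×ₗ ℕ∞) :
    Prod.Lex.prodLexCongr orderIsoXomega orderIsoXomega p ∈ Y19 ↔ p ∈ lexPunctured := by
  simp only [Y19, lexPunctured, mem_ofPred_eq, Prod.Lex.prodLexCongr_apply, ofLex_toLex,
    Prod.map_fst, Prod.map_snd, coe_orderIsoXomega, ← toOrdinal_top, ← toOrdinal_one,
    strictMono_toOrdinal.injective.eq_iff, strictMono_toOrdinal.le_iff_le,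
    strictMono_toOrdinal.lt_iff_lt]

def lexSucc (p : ℕ∞ ×ₗ ℕ∞) : ℕ∞ ×ₗ ℕ∞ := toLex ((ofLex p).1 + 1, (ofLex p).2)

def lexFold (p : ℕ∞ ×ₗ ℕ∞) : ℕ∞ ×ₗ ℕ∞ := toLex (0, (ofLex p).2 - 2)

def lexShift (p : ℕ∞ ×ₗ ℕ∞) : ℕ∞ ×ₗ ℕ∞ :=
  if p < toLex (⊤, 1) then lexSucc p
  else if p = toLex (⊤, 1) then toLex (⊤, ⊤)
  else lexFold p

def lexUnshift (q : ℕ∞ ×ₗ ℕ∞) : ℕ∞ ×ₗ ℕ∞ :=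
  if q < toLex (1, 0) then toLex (⊤, (ofLex q).2 + 2)
  else if q = toLex (⊤, ⊤) then toLex (⊤, 1)
  else toLex ((ofLex q).1 - 1, (ofLex q).2)

section Evaluation

variable (n : ℕ) (b : ℕ∞)

@[simp] theorem lexShift_natCast :
    lexShift (toLex ((n : ℕ∞), b)) = toLex ((n : ℕ∞) + 1, b) := by
  simp [lexShift, lexSucc, Prod.Lex.toLex_lt_toLex]

@[simp] theorem lexShift_top_zero : lexShift (toLex (⊤, 0)) = toLex (⊤, 0) := by
  simp [lexShift, lexSucc, Prod.Lex.toLex_lt_toLex]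

@[simp] theorem lexShift_top_one : lexShift (toLex (⊤, 1)) = toLex (⊤, ⊤) := by
  simp [lexShift]

@[simp] theorem lexShift_top_natCast_add_two :
    lexShift (toLex (⊤, (n : ℕ∞) + 2)) = toLex (0, (n : ℕ∞)) := by
  have : (n : ℕ∞) + 2 ≠ 1 := by norm_cast; omega
  simp [lexShift, lexFold, Prod.Lex.toLex_lt_toLex, this]
  norm_cast

@[simp] theorem lexShift_top_top : lexShift (toLex (⊤, ⊤)) = toLex (0, ⊤) := by
  simp [lexShift, lexFold, Prod.Lex.toLex_lt_toLex]

@[simp] theorem lexUnshift_zero : lexUnshift (toLex (0, b)) = toLex (⊤, b + 2) := by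
  simp [lexUnshift, Prod.Lex.toLex_lt_toLex]

@[simp] theorem lexUnshift_natCast_add_one :
    lexUnshift (toLex ((n : ℕ∞) + 1, b)) = toLex ((n : ℕ∞), b) := by
  simp [lexUnshift, Prod.Lex.toLex_lt_toLex]
  norm_cast

@[simp] theorem lexUnshift_top_zero : lexUnshift (toLex (⊤, 0)) = toLex (⊤, 0) := by
  simp [lexUnshift, Prod.Lex.toLex_lt_toLex]

@[simp] theorem lexUnshift_top_top : lexUnshift (toLex (⊤, ⊤)) = toLex (⊤, 1) := by
  simp [lexUnshift, Prod.Lex.toLex_lt_toLex]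

end Evaluation

theorem lexShift_mem_lexPunctured (p : ℕ∞ ×ₗ ℕ∞) : lexShift p ∈ lexPunctured := by
  induction p using Lex.rec with | h p => ?_
  obtain ⟨a, b⟩ := p
  induction a with
  | top => induction b with
    | top => simp [toLex_mem_lexPunctured]
    | coe n => match n with | 0 | 1 | n + 2 => simp [toLex_mem_lexPunctured]
  | coe n => simp [toLex_mem_lexPunctured]

theorem lexUnshift_lexShift (p : ℕ∞ ×ₗ ℕ∞) : lexUnshift (lexShift p) = p := by
  induction p using Lex.rec with | h p => ?_
  obtain ⟨a, b⟩ := p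
  induction a with
  | top => induction b with
    | top => simp
    | coe n => match n with | 0 | 1 | n + 2 => simp
  | coe n => simp

theorem lexShift_lexUnshift {q : ℕ∞ ×ₗ ℕ∞} (hq : q ∈ lexPunctured) :
    lexShift (lexUnshift q) = q := by
  induction q using Lex.rec with | h q => ?_
  obtain ⟨a, b⟩ := q
  induction a with
  | top => induction b with
    | top => simp
    | coe n => rcases n with _ | n <;> simp_all [toLex_mem_lexPunctured]
  | coe n => match n, b with
    | 0, ⊤ => simp
    | 0, (m : ℕ) => simp
    | n + 1, b => simp

theorem strictMono_lexSucc : StrictMono lexSucc := by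
  simp only [StrictMono, lexSucc, Lex.forall, Prod.forall, ofLex_toLex, Prod.Lex.toLex_lt_toLex]
  rintro a b c d (h | ⟨rfl, h⟩)
  · exact .inl ((ENat.add_lt_add_iff_right one_ne_top).2 h)
  · exact .inr ⟨rfl, h⟩

theorem lexSucc_image_Iio :
    lexSucc '' Iio (toLex (⊤, 1)) = Ioc (toLex (0, ⊤)) (toLex (⊤, 0)) := by
  ext q
  induction q using Lex.rec with | h q => ?_
  obtain ⟨c, d⟩ := q
  simp only [lexSucc, mem_image, Lex.exists, Prod.exists, mem_Iio, mem_Ioc, ofLex_toLex, toLex_inj,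
    Prod.mk.injEq, Prod.Lex.toLex_lt_toLex, Prod.Lex.toLex_le_toLex]
  constructor
  · rintro ⟨a, b, hab, rfl, rfl⟩
    induction a with
    | top => simp_all
    | coe n => simp
  · induction c with
    | top => simp_all
    | coe n =>
      rintro ⟨h, -⟩
      obtain ⟨m, rfl⟩ := Nat.exists_eq_add_one.2 (by simpa using h)
      exact ⟨m, d, by simp⟩

theorem strictMonoOn_lexFold : StrictMonoOn lexFold (Ioi (toLex (⊤, 1))) := by
  simp only [StrictMonoOn, lexFold, Lex.forall, Prod.forall, mem_Ioi, ofLex_toLex,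
    Prod.Lex.toLex_lt_toLex, not_top_lt, false_or]
  rintro a b ⟨rfl, hb⟩ c d ⟨rfl, hd⟩ (h | ⟨-, h⟩)
  · exact absurd h (lt_irrefl _)
  · exact .inr ⟨trivial, (ENat.addLECancellable_of_ne_top (by simp)).tsub_lt_tsub_iff_right
      (ENat.add_one_le_iff (by simp) |>.2 hb) |>.2 h⟩

theorem lexFold_image_Ioi : lexFold '' Ioi (toLex (⊤, 1)) = Iic (toLex (0, ⊤)) := by
  ext q
  induction q using Lex.rec with | h q => ?_
  obtain ⟨c, d⟩ := q
  simp only [lexFold, mem_image, Lex.exists, Prod.exists, mem_Ioi, mem_Iic, ofLex_toLex, toLex_inj,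
    Prod.mk.injEq, Prod.Lex.toLex_lt_toLex, Prod.Lex.toLex_le_toLex]
  constructor
  · rintro ⟨a, b, hab, rfl, rfl⟩
    simp
  · rintro (h | ⟨rfl, -⟩)
    · simp at h
    · refine ⟨⊤, d + 2, ?_⟩
      induction d with
      | top => simp
      | coe n => norm_cast; simp

theorem Ioo_top_zero_top_two :
    Ioo (toLex ((⊤ : ℕ∞), (0 : ℕ∞))) (toLex (⊤, 2)) = {toLex (⊤, 1)} := by
  ext q
  induction q using Lex.rec with | h q => ?_
  obtain ⟨c, d⟩ := q
  simp only [mem_singleton_iff, mem_Ioo, toLex_inj, Prod.mk.injEq, Prod.Lex.toLex_lt_toLex,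
    not_top_lt, false_or]
  constructor
  · rintro ⟨⟨rfl, hd₀⟩, h | ⟨-, hd₂⟩⟩
    · simp at h
    · exact ⟨rfl, le_antisymm (ENat.lt_two_iff.1 hd₂) (Order.one_le_iff_pos.2 hd₀)⟩
  · rintro ⟨rfl, rfl⟩
    simp

variable [TopologicalSpace (ℕ∞ ×ₗ ℕ∞)] [OrderTopology (ℕ∞ ×ₗ ℕ∞)]

theorem continuous_lexShift : Continuous lexShift := by
  have hIio : ContinuousOn lexShift (Iio (toLex (⊤, 1))) := by
    refine (strictMono_lexSucc.strictMonoOn _).continuousOn_of_ordConnected ?_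
      |>.congr fun p hp => if_pos hp
    rw [lexSucc_image_Iio]
    exact ordConnected_Ioc
  have hIoi : ContinuousOn lexShift (Ioi (toLex (⊤, 1))) := by
    refine strictMonoOn_lexFold.continuousOn_of_ordConnected ?_ |>.congr fun p hp => ?_
    · rw [lexFold_image_Ioi]
      exact ordConnected_Iic
    · simp [lexShift, (mem_Ioi.1 hp).not_gt, (mem_Ioi.1 hp).ne']
  refine continuous_iff_continuousAt.2 fun p => ?_
  rcases lt_trichotomy p (toLex (⊤, 1)) with h | rfl | h
  · exact hIio.continuousAt (isOpen_Iio.mem_nhds h)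
  · have hopen : IsOpen ({toLex (⊤, 1)} : Set (ℕ∞ ×ₗ ℕ∞)) :=
      Ioo_top_zero_top_two ▸ isOpen_Ioo
    exact (continuousOn_singleton _ _).continuousAt (hopen.mem_nhds rfl)
  · exact hIoi.continuousAt (isOpen_Ioi.mem_nhds h)

noncomputable def lexPuncturedHomeomorph : ℕ∞ ×ₗ ℕ∞ ≃ₜ lexPunctured :=
  have := compactSpace_of_wellFoundedLT (α := ℕ∞ ×ₗ ℕ∞)
  Continuous.homeoOfEquivCompactToT2 (f :=
    { toFun p := ⟨lexShift p, lexShift_mem_lexPunctured p⟩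
      invFun q := lexUnshift q
      left_inv := lexUnshift_lexShift
      right_inv q := Subtype.ext (lexShift_lexUnshift q.2) })
    (continuous_lexShift.subtype_mk _)

end ENat

instance : OrderTopology (Xomega ×ₗ Xomega) := ⟨rfl⟩

/-- `Y`, with the subspace topology from `X ×ₗ X`, is homeomorphic to `X ×ₗ X`. -/
theorem stmt_19 : Nonempty (↥Y19 ≃ₜ (Xomega ×ₗ Xomega)) := by
  let : TopologicalSpace (ℕ∞ ×ₗ ℕ∞) := Preorder.topology _
  have : OrderTopology (ℕ∞ ×ₗ ℕ∞) := ⟨rfl⟩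
  let Φ := (Prod.Lex.prodLexCongr ENat.orderIsoXomega ENat.orderIsoXomega).toHomeomorph
  have hΦ (p : ℕ∞ ×ₗ ℕ∞) : p ∈ ENat.lexPunctured ↔ Φ p ∈ Y19 :=
    (ENat.prodLexCongr_orderIsoXomega_mem_Y19 p).symm
  exact ⟨(Φ.subtype hΦ).symm.trans (ENat.lexPuncturedHomeomorph.symm.trans Φ)⟩
end
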